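/- arXiv:2512.13967 — 5 statements merged into one kernel-verified Lean document; each statement's English description precedes it below -/
import Mathlib

section
/- Let r ≥ 2, let S ⊆ F_r consist only of cyclically reduced elements, and let S̄ be the set of all w ∈ F_r whose cyclic reduction lies in S. If there is a real number b > √(2r−1) such that 𝔤_n(S) ∈ Θ(bⁿ) (i.e., there are c, C > 0 with c·bⁿ ≤ 𝔤_n(S) ≤ C·bⁿ for all sufficiently large n), then 𝔤_n(S̄) ∈ Θ(bⁿ). -/
/-- An element of a free group is cyclically reduced if its reduced word is empty or
its first letter is not the inverse of its last letter. -/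
def CyclicallyReducedFG {r : ℕ} (w : FreeGroup (Fin r)) : Prop :=
  ∀ x ∈ w.toWord.head?, ∀ y ∈ w.toWord.getLast?, x ≠ (y.1, !y.2)

/-- Growth function: number of elements of `S` of reduced length `n`. -/
noncomputable def growthFG {r : ℕ} (S : Set (FreeGroup (Fin r))) (n : ℕ) : ℕ :=
  Nat.card {w : FreeGroup (Fin r) // w ∈ S ∧ FreeGroup.norm w = n}

section Aux
open FreeGroup Finset

lemma reduce_tail_aux {α : Type*} [DecidableEq α] {a : α × Bool} {t : List (α × Bool)}
    (h : FreeGroup.reduce (a :: t) = a :: t) : FreeGroup.reduce t = t := by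
  have hc := FreeGroup.reduce.cons (L := t) a
  cases hrt : FreeGroup.reduce t with
  | nil =>
    rw [hrt] at hc
    simp only at hc
    rw [h] at hc
    have ht : t = [] := by injection hc
    rw [ht]
  | cons hd tl =>
    rw [hrt] at hc
    simp only at hc
    by_cases hcond : a.1 = hd.1 ∧ a.2 = !hd.2
    · rw [if_pos hcond] at hc
      rw [h] at hc
      have h1 : (FreeGroup.reduce t).length ≤ t.length := FreeGroup.reduce.red.length_le
      rw [hrt] at h1
      have h2 := congrArg List.length hc
      simp only [List.length_cons] at h2 h1
      omega
    · rw [if_neg hcond] at hc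
      rw [h] at hc
      have ht : t = hd :: tl := by injection hc
      rw [ht, ← hrt, ht]

lemma finite_norm_eq (r n : ℕ) : {w : FreeGroup (Fin r) | FreeGroup.norm w = n}.Finite := by
  have h : {w : FreeGroup (Fin r) | FreeGroup.norm w = n}
      ⊆ FreeGroup.toWord ⁻¹' {l : List (Fin r × Bool) | l.length = n} := fun w hw => hw
  exact (Set.Finite.preimage (FreeGroup.toWord_injective.injOn)
    (List.finite_length_eq _ n)).subset h

lemma step_bound (r k : ℕ) (hk : 1 ≤ k) :
    {w : FreeGroup (Fin r) | FreeGroup.norm w = k + 1}.ncard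
      ≤ (2 * r - 1) * {w : FreeGroup (Fin r) | FreeGroup.norm w = k}.ncard := by
  classical
  set Wk := (finite_norm_eq r k).toFinset with hWk
  set Wk1 := (finite_norm_eq r (k+1)).toFinset with hWk1
  rw [Set.ncard_eq_toFinset_card _ (finite_norm_eq r (k+1)),
    Set.ncard_eq_toFinset_card _ (finite_norm_eq r k)]
  -- bucket of admissible letters to prepend to `w'`
  set bucket : FreeGroup (Fin r) → Finset (Fin r × Bool) := fun w' =>
    Finset.univ.filter (fun l => FreeGroup.norm (FreeGroup.mk [l] * w')
      = FreeGroup.norm w' + 1) with hbucket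
  have hsub : Wk1 ⊆ Wk.biUnion (fun w' => (bucket w').image (fun l => FreeGroup.mk [l] * w')) := by
    intro w hw
    have hwn : FreeGroup.norm w = k + 1 := by
      simpa [hWk1] using hw
    cases htw : w.toWord with
    | nil =>
      exfalso
      have : FreeGroup.norm w = 0 := by simp [FreeGroup.norm, htw]
      omega
    | cons x t =>
      have hredxt : FreeGroup.reduce (x :: t) = x :: t := by
        rw [← htw]; exact FreeGroup.reduce_toWord w
      have hredt : FreeGroup.reduce t = t := reduce_tail_aux hredxt
      have htlen : t.length = k := by
        have := congrArg List.length htw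
        simp only [List.length_cons] at this
        have h0 : w.toWord.length = k + 1 := hwn
        omega
      have hnormt : FreeGroup.norm (FreeGroup.mk t) = k := by
        show (FreeGroup.mk t).toWord.length = k
        rw [FreeGroup.toWord_mk, hredt, htlen]
      have hmul : FreeGroup.mk [x] * FreeGroup.mk t = w := by
        rw [FreeGroup.mul_mk]
        show FreeGroup.mk (x :: t) = w
        rw [← htw, FreeGroup.mk_toWord]
      rw [Finset.mem_biUnion]
      refine ⟨FreeGroup.mk t, by simp [hWk, hnormt], ?_⟩
      rw [Finset.mem_image]
      refine ⟨x, ?_, hmul⟩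
      rw [hbucket]
      simp only [Finset.mem_filter, Finset.mem_univ, true_and]
      rw [hmul, hnormt, hwn]
  have hbcard : ∀ w' ∈ Wk, (bucket w').card ≤ 2 * r - 1 := by
    intro w' hw'
    have hnw' : FreeGroup.norm w' = k := by simpa [hWk] using hw'
    have hne : w'.toWord ≠ [] := by
      intro h
      have : FreeGroup.norm w' = 0 := by simp [FreeGroup.norm, h]
      omega
    cases htw' : w'.toWord with
    | nil => exact absurd htw' hne
    | cons h t' =>
      have hsub2 : bucket w' ⊆ Finset.univ.erase (h.1, !h.2) := by
        intro l hl
        rw [hbucket] at hl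
        simp only [Finset.mem_filter, Finset.mem_univ, true_and] at hl
        rw [Finset.mem_erase]
        refine ⟨?_, Finset.mem_univ _⟩
        intro hlx
        have hredw' : FreeGroup.reduce (h :: t') = h :: t' := by
          rw [← htw']; exact FreeGroup.reduce_toWord w'
        have hmul : FreeGroup.mk [l] * w' = FreeGroup.mk (l :: h :: t') := by
          conv_lhs => rw [← FreeGroup.mk_toWord (x := w')]
          rw [FreeGroup.mul_mk, htw']
          rfl
        have hred : FreeGroup.reduce (l :: h :: t') = t' := by
          have hc := FreeGroup.reduce.cons (L := h :: t') l
          rw [hredw'] at hc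
          simp only at hc
          rw [if_pos (by rw [hlx]; exact ⟨rfl, rfl⟩)] at hc
          exact hc
        have hval : FreeGroup.norm (FreeGroup.mk [l] * w') = t'.length := by
          rw [hmul]
          show (FreeGroup.mk (l :: h :: t')).toWord.length = t'.length
          rw [FreeGroup.toWord_mk, hred]
        rw [hval] at hl
        have : FreeGroup.norm w' = t'.length + 1 := by
          show w'.toWord.length = t'.length + 1
          rw [htw']; simp
        omega
      calc (bucket w').card ≤ (Finset.univ.erase (h.1, !h.2)).card := Finset.card_le_card hsub2
        _ = Fintype.card (Fin r × Bool) - 1 := by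
            rw [Finset.card_erase_of_mem (Finset.mem_univ _), Finset.card_univ]
        _ = 2 * r - 1 := by simp [Fintype.card_prod]; omega
  calc Wk1.card ≤ (Wk.biUnion (fun w' => (bucket w').image
          (fun l => FreeGroup.mk [l] * w'))).card := Finset.card_le_card hsub
    _ ≤ ∑ w' ∈ Wk, ((bucket w').image (fun l => FreeGroup.mk [l] * w')).card :=
        Finset.card_biUnion_le
    _ ≤ ∑ w' ∈ Wk, (2 * r - 1) := by
        refine Finset.sum_le_sum fun w' hw' => ?_
        exact (Finset.card_image_le).trans (hbcard w' hw')
    _ = (2 * r - 1) * Wk.card := by rw [Finset.sum_const, smul_eq_mul, mul_comm]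

lemma norm_zero_card (r : ℕ) : {w : FreeGroup (Fin r) | FreeGroup.norm w = 0}.ncard = 1 := by
  have : {w : FreeGroup (Fin r) | FreeGroup.norm w = 0} = {1} := by
    ext w; simp [FreeGroup.norm_eq_zero]
  rw [this, Set.ncard_singleton]

lemma norm_one_card (r : ℕ) : {w : FreeGroup (Fin r) | FreeGroup.norm w = 1}.ncard ≤ 2 * r := by
  classical
  rw [Set.ncard_eq_toFinset_card _ (finite_norm_eq r 1)]
  have hsub : (finite_norm_eq r 1).toFinset ⊆
      (Finset.univ : Finset (Fin r × Bool)).image (fun l => FreeGroup.mk [l]) := by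
    intro w hw
    have hwn : FreeGroup.norm w = 1 := by simpa using hw
    rw [Finset.mem_image]
    cases htw : w.toWord with
    | nil =>
      exfalso
      have : FreeGroup.norm w = 0 := by simp [FreeGroup.norm, htw]
      omega
    | cons x t =>
      have ht : t = [] := by
        have := congrArg List.length htw
        have h0 : w.toWord.length = 1 := hwn
        simp only [List.length_cons] at this
        rw [h0] at this
        simpa using (by omega : t.length = 0)
      refine ⟨x, Finset.mem_univ _, ?_⟩
      rw [← FreeGroup.mk_toWord (x := w), htw, ht]
  calc (finite_norm_eq r 1).toFinset.card
      ≤ ((Finset.univ : Finset (Fin r × Bool)).image (fun l => FreeGroup.mk [l])).card :=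
        Finset.card_le_card hsub
    _ ≤ Fintype.card (Fin r × Bool) := by
        exact (Finset.card_image_le).trans (le_of_eq (Finset.card_univ))
    _ = 2 * r := by simp [Fintype.card_prod]; omega

lemma count_bound (r : ℕ) (hr : 1 ≤ r) (k : ℕ) :
    {w : FreeGroup (Fin r) | FreeGroup.norm w = k}.ncard ≤ 2 * (2 * r - 1) ^ k := by
  induction k with
  | zero => simp [norm_zero_card]
  | succ k ih =>
    cases k with
    | zero =>
      calc {w : FreeGroup (Fin r) | FreeGroup.norm w = 1}.ncard ≤ 2 * r := norm_one_card r
        _ ≤ 2 * (2 * r - 1) ^ 1 := by rw [pow_one]; omega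
    | succ j =>
      calc {w : FreeGroup (Fin r) | FreeGroup.norm w = j + 1 + 1}.ncard
          ≤ (2 * r - 1) * {w : FreeGroup (Fin r) | FreeGroup.norm w = j + 1}.ncard :=
            step_bound r (j+1) (by omega)
        _ ≤ (2 * r - 1) * (2 * (2 * r - 1) ^ (j + 1)) := Nat.mul_le_mul_left _ ih
        _ = 2 * (2 * r - 1) ^ (j + 1 + 1) := by ring

lemma growthFG_eq_ncard {r : ℕ} (S : Set (FreeGroup (Fin r))) (n : ℕ) :
    growthFG S n = {w : FreeGroup (Fin r) | w ∈ S ∧ FreeGroup.norm w = n}.ncard := by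
  rw [growthFG, ← Nat.card_coe_set_eq]
  rfl

lemma finite_growth_set {r : ℕ} (S : Set (FreeGroup (Fin r))) (n : ℕ) :
    {w : FreeGroup (Fin r) | w ∈ S ∧ FreeGroup.norm w = n}.Finite :=
  (finite_norm_eq r n).subset (fun w hw => hw.2)

lemma sbar_sum_bound {r : ℕ} (S Sbar : Set (FreeGroup (Fin r)))
    (hSbar : Sbar = {w | ∃ v u : FreeGroup (Fin r), u ∈ S ∧ w = v * u * v⁻¹ ∧
      FreeGroup.norm w = 2 * FreeGroup.norm v + FreeGroup.norm u}) (n : ℕ) :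
    growthFG Sbar n ≤ ∑ k ∈ Finset.range (n / 2 + 1),
      {w : FreeGroup (Fin r) | FreeGroup.norm w = k}.ncard * growthFG S (n - 2 * k) := by
  classical
  rw [growthFG_eq_ncard, Set.ncard_eq_toFinset_card _ (finite_growth_set Sbar n)]
  have hsub : (finite_growth_set Sbar n).toFinset ⊆
      (Finset.range (n / 2 + 1)).biUnion (fun k =>
        ((finite_norm_eq r k).toFinset ×ˢ (finite_growth_set S (n - 2 * k)).toFinset).image
          (fun p => p.1 * p.2 * p.1⁻¹)) := by
    intro w hw
    rw [Set.Finite.mem_toFinset] at hw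
    obtain ⟨hwS, hwn⟩ := hw
    rw [hSbar] at hwS
    obtain ⟨v, u, huS, hweq, hwnorm⟩ := hwS
    rw [Finset.mem_biUnion]
    refine ⟨FreeGroup.norm v, ?_, ?_⟩
    · rw [Finset.mem_range]; omega
    · rw [Finset.mem_image]
      refine ⟨(v, u), ?_, hweq.symm⟩
      rw [Finset.mem_product]
      constructor
      · rw [Set.Finite.mem_toFinset]
        show FreeGroup.norm v = FreeGroup.norm v
        rfl
      · rw [Set.Finite.mem_toFinset]
        show u ∈ S ∧ FreeGroup.norm u = n - 2 * FreeGroup.norm v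
        exact ⟨huS, by omega⟩
  calc (finite_growth_set Sbar n).toFinset.card
      ≤ _ := Finset.card_le_card hsub
    _ ≤ ∑ k ∈ Finset.range (n / 2 + 1),
        (((finite_norm_eq r k).toFinset ×ˢ (finite_growth_set S (n - 2 * k)).toFinset).image
          (fun p => p.1 * p.2 * p.1⁻¹)).card := Finset.card_biUnion_le
    _ ≤ ∑ k ∈ Finset.range (n / 2 + 1),
        {w : FreeGroup (Fin r) | FreeGroup.norm w = k}.ncard * growthFG S (n - 2 * k) := by
      refine Finset.sum_le_sum fun k _ => ?_
      calc _ ≤ ((finite_norm_eq r k).toFinset ×ˢ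
              (finite_growth_set S (n - 2 * k)).toFinset).card := Finset.card_image_le
        _ = _ := by
          rw [Finset.card_product, Set.ncard_eq_toFinset_card _ (finite_norm_eq r k),
            growthFG_eq_ncard, Set.ncard_eq_toFinset_card _ (finite_growth_set S (n - 2 * k))]

lemma growth_mono_sbar {r : ℕ} (S Sbar : Set (FreeGroup (Fin r)))
    (hSbar : Sbar = {w | ∃ v u : FreeGroup (Fin r), u ∈ S ∧ w = v * u * v⁻¹ ∧
      FreeGroup.norm w = 2 * FreeGroup.norm v + FreeGroup.norm u}) (n : ℕ) :
    growthFG S n ≤ growthFG Sbar n := by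
  rw [growthFG_eq_ncard, growthFG_eq_ncard]
  refine Set.ncard_le_ncard ?_ (finite_growth_set Sbar n)
  intro w hw
  refine ⟨?_, hw.2⟩
  rw [hSbar]
  exact ⟨1, w, hw.1, by group, by simp⟩

theorem cyclic_closure_growth' (r : ℕ) (hr : 2 ≤ r)
    (S : Set (FreeGroup (Fin r)))
    (Sbar : Set (FreeGroup (Fin r)))
    (hSbar : Sbar = {w | ∃ v u : FreeGroup (Fin r), u ∈ S ∧ w = v * u * v⁻¹ ∧
      FreeGroup.norm w = 2 * FreeGroup.norm v + FreeGroup.norm u})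
    (b : ℝ) (hb : Real.sqrt (2 * r - 1) < b)
    (hgrowth : ∃ c > (0 : ℝ), ∃ C > (0 : ℝ), ∃ m : ℕ, ∀ n ≥ m,
      c * b ^ n ≤ (growthFG S n : ℝ) ∧ (growthFG S n : ℝ) ≤ C * b ^ n) :
    ∃ c > (0 : ℝ), ∃ C > (0 : ℝ), ∃ m : ℕ, ∀ n ≥ m,
      c * b ^ n ≤ (growthFG Sbar n : ℝ) ∧ (growthFG Sbar n : ℝ) ≤ C * b ^ n := by
  obtain ⟨c, hc, C, hC, m, hm⟩ := hgrowth
  have hcast : ((2 * r - 1 : ℕ) : ℝ) = 2 * (r : ℝ) - 1 := by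
    have : (1 : ℕ) ≤ 2 * r := by omega
    push_cast [this]
    ring
  have hb1 : (1 : ℝ) < b := by
    refine lt_of_le_of_lt ?_ hb
    rw [Real.one_le_sqrt]
    have : (2 : ℝ) ≤ (r : ℝ) := by exact_mod_cast hr
    linarith
  have hb0 : (0 : ℝ) < b := lt_trans one_pos hb1
  have hb2 : ((2 * r - 1 : ℕ) : ℝ) < b ^ 2 := by
    rw [hcast]
    exact (Real.sqrt_lt' hb0).mp hb
  set q : ℝ := ((2 * r - 1 : ℕ) : ℝ) / b ^ 2 with hqdef
  have hq0 : 0 ≤ q := div_nonneg (Nat.cast_nonneg _) (by positivity)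
  have hq1 : q < 1 := (div_lt_one (by positivity)).mpr hb2
  set M : ℝ := ∑ j ∈ Finset.range m, (growthFG S j : ℝ) with hM
  have hM0 : 0 ≤ M := Finset.sum_nonneg fun i _ => Nat.cast_nonneg _
  set C'' : ℝ := max C (M + 1) with hC''
  have hC''pos : 0 < C'' := lt_max_of_lt_left hC
  have huni : ∀ j, (growthFG S j : ℝ) ≤ C'' * b ^ j := by
    intro j
    rcases le_or_gt m j with h | h
    · exact (hm j h).2.trans
        (mul_le_mul_of_nonneg_right (le_max_left _ _) (pow_nonneg hb0.le j))
    · have h1 : (growthFG S j : ℝ) ≤ M :=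
        Finset.single_le_sum (f := fun j => (growthFG S j : ℝ))
          (fun i _ => Nat.cast_nonneg _) (Finset.mem_range.mpr h)
      calc (growthFG S j : ℝ) ≤ M := h1
        _ ≤ (M + 1) * 1 := by linarith
        _ ≤ C'' * b ^ j := by
            apply mul_le_mul (le_max_right _ _) (one_le_pow₀ hb1.le) zero_le_one hC''pos.le
  have hgeo : ∀ K : ℕ, ∑ k ∈ Finset.range K, q ^ k ≤ (1 - q)⁻¹ := by
    intro K
    have hsummable : Summable (fun k : ℕ => q ^ k) := summable_geometric_of_lt_one hq0 hq1
    calc ∑ k ∈ Finset.range K, q ^ k ≤ ∑' k : ℕ, q ^ k :=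
          Summable.sum_le_tsum (Finset.range K) (fun i _ => pow_nonneg hq0 i) hsummable
      _ = (1 - q)⁻¹ := tsum_geometric_of_lt_one hq0 hq1
  have hup : ∀ n, (growthFG Sbar n : ℝ) ≤ 2 * C'' * (1 - q)⁻¹ * b ^ n := by
    intro n
    have h1 : (growthFG Sbar n : ℝ) ≤ ∑ k ∈ Finset.range (n / 2 + 1),
        ({w : FreeGroup (Fin r) | FreeGroup.norm w = k}.ncard : ℝ)
          * (growthFG S (n - 2 * k) : ℝ) := by
      have h := sbar_sum_bound S Sbar hSbar n
      calc (growthFG Sbar n : ℝ) ≤ ((∑ k ∈ Finset.range (n / 2 + 1),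
            {w : FreeGroup (Fin r) | FreeGroup.norm w = k}.ncard
              * growthFG S (n - 2 * k) : ℕ) : ℝ) := Nat.cast_le.mpr h
        _ = _ := by push_cast; rfl
    have h2 : ∀ k ∈ Finset.range (n / 2 + 1),
        ({w : FreeGroup (Fin r) | FreeGroup.norm w = k}.ncard : ℝ)
          * (growthFG S (n - 2 * k) : ℝ) ≤ 2 * C'' * b ^ n * q ^ k := by
      intro k hk
      rw [Finset.mem_range] at hk
      have h2k : 2 * k ≤ n := by omega
      have hcount : ({w : FreeGroup (Fin r) | FreeGroup.norm w = k}.ncard : ℝ)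
          ≤ 2 * ((2 * r - 1 : ℕ) : ℝ) ^ k := by
        have := count_bound r (by omega) k
        calc ({w : FreeGroup (Fin r) | FreeGroup.norm w = k}.ncard : ℝ)
            ≤ ((2 * (2 * r - 1) ^ k : ℕ) : ℝ) := Nat.cast_le.mpr this
          _ = 2 * ((2 * r - 1 : ℕ) : ℝ) ^ k := by push_cast; ring
      have hterm : (2 * ((2 * r - 1 : ℕ) : ℝ) ^ k) * (C'' * b ^ (n - 2 * k))
          = 2 * C'' * b ^ n * q ^ k := by
        rw [hqdef, div_pow, pow_sub₀ b hb0.ne' h2k, ← pow_mul]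
        field_simp
      calc ({w : FreeGroup (Fin r) | FreeGroup.norm w = k}.ncard : ℝ)
            * (growthFG S (n - 2 * k) : ℝ)
          ≤ (2 * ((2 * r - 1 : ℕ) : ℝ) ^ k) * (C'' * b ^ (n - 2 * k)) := by
            apply mul_le_mul hcount (huni _) (Nat.cast_nonneg _)
            positivity
        _ = 2 * C'' * b ^ n * q ^ k := hterm
    calc (growthFG Sbar n : ℝ)
        ≤ ∑ k ∈ Finset.range (n / 2 + 1),
          ({w : FreeGroup (Fin r) | FreeGroup.norm w = k}.ncard : ℝ)
            * (growthFG S (n - 2 * k) : ℝ) := h1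
      _ ≤ ∑ k ∈ Finset.range (n / 2 + 1), 2 * C'' * b ^ n * q ^ k := Finset.sum_le_sum h2
      _ = 2 * C'' * b ^ n * ∑ k ∈ Finset.range (n / 2 + 1), q ^ k := by
          rw [Finset.mul_sum]
      _ ≤ 2 * C'' * b ^ n * (1 - q)⁻¹ := by
          apply mul_le_mul_of_nonneg_left (hgeo _) (by positivity)
      _ = 2 * C'' * (1 - q)⁻¹ * b ^ n := by ring
  refine ⟨c, hc, 2 * C'' * (1 - q)⁻¹,
    mul_pos (by positivity) (inv_pos.mpr (by linarith)), m, fun n hn => ⟨?_, hup n⟩⟩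
  calc c * b ^ n ≤ (growthFG S n : ℝ) := (hm n hn).1
    _ ≤ (growthFG Sbar n : ℝ) := Nat.cast_le.mpr (growth_mono_sbar S Sbar hSbar n)

end Aux

theorem cyclic_closure_growth (r : ℕ) (hr : 2 ≤ r)
    (S : Set (FreeGroup (Fin r)))
    (hScr : ∀ w ∈ S, CyclicallyReducedFG w)
    -- `S̄` : elements whose cyclic reduction lies in `S`, i.e. elements factoring in reduced
    -- form as `v * u * v⁻¹` with `u ∈ S` (and `u` cyclically reduced since `u ∈ S`).
    (Sbar : Set (FreeGroup (Fin r)))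
    (hSbar : Sbar = {w | ∃ v u : FreeGroup (Fin r), u ∈ S ∧ w = v * u * v⁻¹ ∧
      FreeGroup.norm w = 2 * FreeGroup.norm v + FreeGroup.norm u})
    (b : ℝ) (hb : Real.sqrt (2 * r - 1) < b)
    (hgrowth : ∃ c > (0 : ℝ), ∃ C > (0 : ℝ), ∃ m : ℕ, ∀ n ≥ m,
      c * b ^ n ≤ (growthFG S n : ℝ) ∧ (growthFG S n : ℝ) ≤ C * b ^ n) :
    ∃ c > (0 : ℝ), ∃ C > (0 : ℝ), ∃ m : ℕ, ∀ n ≥ m,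
      c * b ^ n ≤ (growthFG Sbar n : ℝ) ∧ (growthFG Sbar n : ℝ) ≤ C * b ^ n :=
  cyclic_closure_growth' r hr S Sbar hSbar b hb hgrowth
end

section
/- Let r ≥ 2 and let w ∈ F_r. Suppose there is an index j such that for every generator x_i with i ≠ j, the inverse letter x_i⁻¹ does not occur in the reduced word of w (i.e., all generators except possibly x_j occur in w only with positive exponents). Then w is potentially positive. -/
/-- An element of `F_r` is positive if it lies in the submonoid generated by the generators. -/
def PositiveFG {r : ℕ} (w : FreeGroup (Fin r)) : Prop :=
  w ∈ Submonoid.closure (Set.range (FreeGroup.of : Fin r → FreeGroup (Fin r)))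

/-- An element is potentially positive if some automorphism sends it to a positive element. -/
def PotPosFG {r : ℕ} (w : FreeGroup (Fin r)) : Prop :=
  ∃ φ : FreeGroup (Fin r) ≃* FreeGroup (Fin r), PositiveFG (φ w)

namespace AllButOneAux

open FreeGroup

variable {r : ℕ}

local notation "M" => Submonoid.closure (Set.range (FreeGroup.of : Fin r → FreeGroup (Fin r)))

lemma of_mem (i : Fin r) : FreeGroup.of i ∈ M :=
  Submonoid.subset_closure ⟨i, rfl⟩

lemma pow_mem' (i : Fin r) (n : ℕ) : (FreeGroup.of i) ^ n ∈ M :=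
  pow_mem (of_mem i) n

lemma zpow_mem' (i : Fin r) (t : ℤ) (ht : 0 ≤ t) : (FreeGroup.of i) ^ t ∈ M := by
  obtain ⟨n, rfl⟩ := Int.eq_ofNat_of_zero_le ht
  rw [zpow_natCast]
  exact pow_mem' i n

lemma mk_single_true (i : Fin r) : FreeGroup.mk [(i, true)] = FreeGroup.of i := rfl

lemma mk_single_false (i : Fin r) : FreeGroup.mk [(i, false)] = (FreeGroup.of i)⁻¹ := by
  rw [← mk_single_true, FreeGroup.inv_mk]
  rfl

lemma mk_cons (p : Fin r × Bool) (L : List (Fin r × Bool)) :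
    FreeGroup.mk (p :: L) = FreeGroup.mk [p] * FreeGroup.mk L := by
  rw [FreeGroup.mul_mk]
  rfl

/-- Lemma A: if all letters have first coordinate `j`, the image is a power of `of j`
with exponent bounded below by minus the length. -/
lemma lemA (j : Fin r) (ψ : FreeGroup (Fin r) →* FreeGroup (Fin r))
    (hj : ψ (FreeGroup.of j) = FreeGroup.of j) :
    ∀ L : List (Fin r × Bool), (∀ p ∈ L, p.1 = j) →
      ∃ t : ℤ, -(L.length : ℤ) ≤ t ∧ ψ (FreeGroup.mk L) = (FreeGroup.of j) ^ t := by
  intro L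
  induction L with
  | nil =>
    intro _
    refine ⟨0, by simp, ?_⟩
    rw [← FreeGroup.one_eq_mk, _root_.map_one, zpow_zero]
  | cons p L ih =>
    intro hall
    obtain ⟨t, htb, ht⟩ := ih fun q hq => hall q (List.mem_cons_of_mem _ hq)
    obtain ⟨i, b⟩ := p
    have hp1 : i = j := hall (i, b) (List.mem_cons_self)
    subst i
    cases b with
    | true =>
      refine ⟨1 + t, ?_, ?_⟩
      · simp only [List.length_cons]; push_cast; omega
      · rw [mk_cons, _root_.map_mul, ht, mk_single_true, hj, zpow_add, zpow_one]
    | false =>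
      refine ⟨-1 + t, ?_, ?_⟩
      · simp only [List.length_cons]; push_cast; omega
      · rw [mk_cons, _root_.map_mul, ht, mk_single_false, _root_.map_inv, hj, zpow_add, zpow_neg_one]

/-- Lemma B: if letters are positive or `j`-letters, and some letter is a non-`j` letter,
then the image under the padding homomorphism is `(of j)^t * q` with `q` positive and
`t ≥ N - length`. -/
lemma lemB (j : Fin r) (N : ℕ) (ψ : FreeGroup (Fin r) →* FreeGroup (Fin r))
    (hj : ψ (FreeGroup.of j) = FreeGroup.of j)
    (hi : ∀ i : Fin r, i ≠ j →
      ψ (FreeGroup.of i) = (FreeGroup.of j) ^ N * FreeGroup.of i * (FreeGroup.of j) ^ N) :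
    ∀ L : List (Fin r × Bool), (∀ p ∈ L, p.2 = true ∨ p.1 = j) → L.length ≤ N →
      (∃ p ∈ L, p.1 ≠ j) →
      ∃ t : ℤ, (N : ℤ) - L.length ≤ t ∧
        ∃ q ∈ M, ψ (FreeGroup.mk L) = (FreeGroup.of j) ^ t * q := by
  intro L
  induction L with
  | nil =>
    rintro _ _ ⟨p, hp, _⟩
    exact absurd hp List.not_mem_nil
  | cons p L ih =>
    intro hall hlen hgood
    obtain ⟨i, b⟩ := p
    have hlen' : L.length ≤ N := by
      simp only [List.length_cons] at hlen; omega
    by_cases hij : i = j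
    · subst i
      have hgood' : ∃ p ∈ L, p.1 ≠ j := by
        obtain ⟨q, hq, hqj⟩ := hgood
        rcases List.mem_cons.1 hq with rfl | hq'
        · exact absurd rfl hqj
        · exact ⟨q, hq', hqj⟩
      obtain ⟨t, htb, q, hq, ht⟩ :=
        ih (fun p hp => hall p (List.mem_cons_of_mem _ hp)) hlen' hgood'
      cases b with
      | true =>
        refine ⟨1 + t, ?_, q, hq, ?_⟩
        · simp only [List.length_cons] at *; push_cast at *; omega
        · rw [mk_cons, _root_.map_mul, ht, mk_single_true, hj]
          group
      | false =>
        refine ⟨-1 + t, ?_, q, hq, ?_⟩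
        · simp only [List.length_cons] at *; push_cast at *; omega
        · rw [mk_cons, _root_.map_mul, ht, mk_single_false, _root_.map_inv, hj]
          group
    · have hb : b = true := by
        rcases hall (i, b) (List.mem_cons_self) with h1 | h1
        · exact h1
        · exact absurd h1 hij
      subst hb
      by_cases hg : ∃ p ∈ L, p.1 ≠ j
      · obtain ⟨t, htb, q, hq, ht⟩ :=
          ih (fun p hp => hall p (List.mem_cons_of_mem _ hp)) hlen' hg
        have ht0 : (0 : ℤ) ≤ (N : ℤ) + t := by
          have : (L.length : ℤ) ≤ N := by exact_mod_cast hlen'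
          omega
        refine ⟨(N : ℤ), ?_, FreeGroup.of i * ((FreeGroup.of j) ^ ((N : ℤ) + t) * q), ?_, ?_⟩
        · simp only [List.length_cons]; push_cast; omega
        · exact mul_mem (of_mem i) (mul_mem (zpow_mem' j _ ht0) hq)
        · rw [mk_cons, _root_.map_mul, ht, mk_single_true, hi i hij,
            ← zpow_natCast (FreeGroup.of j) N]
          group
      · have hallj : ∀ p ∈ L, p.1 = j := by
          intro p hp
          by_contra hc
          exact hg ⟨p, hp, hc⟩
        obtain ⟨t, htb, ht⟩ := lemA j ψ hj L hallj
        have ht0 : (0 : ℤ) ≤ (N : ℤ) + t := by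
          have : (L.length : ℤ) ≤ N := by exact_mod_cast hlen'
          omega
        refine ⟨(N : ℤ), ?_, FreeGroup.of i * (FreeGroup.of j) ^ ((N : ℤ) + t), ?_, ?_⟩
        · simp only [List.length_cons]; push_cast; omega
        · exact mul_mem (of_mem i) (zpow_mem' j _ ht0)
        · rw [mk_cons, _root_.map_mul, ht, mk_single_true, hi i hij,
            ← zpow_natCast (FreeGroup.of j) N]
          group

/-- The padding homomorphism. -/
def padHomF (j : Fin r) (N : ℕ) : FreeGroup (Fin r) →* FreeGroup (Fin r) :=
  FreeGroup.lift fun i =>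
    if i = j then FreeGroup.of j
    else (FreeGroup.of j) ^ N * FreeGroup.of i * (FreeGroup.of j) ^ N

/-- Its inverse. -/
def padHomG (j : Fin r) (N : ℕ) : FreeGroup (Fin r) →* FreeGroup (Fin r) :=
  FreeGroup.lift fun i =>
    if i = j then FreeGroup.of j
    else ((FreeGroup.of j) ^ N)⁻¹ * FreeGroup.of i * ((FreeGroup.of j) ^ N)⁻¹

lemma padHomF_of_j (j : Fin r) (N : ℕ) : padHomF j N (FreeGroup.of j) = FreeGroup.of j := by
  simp [padHomF]

lemma padHomF_of_ne (j : Fin r) (N : ℕ) (i : Fin r) (hij : i ≠ j) :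
    padHomF j N (FreeGroup.of i) =
      (FreeGroup.of j) ^ N * FreeGroup.of i * (FreeGroup.of j) ^ N := by
  simp [padHomF, hij]

/-- The padding automorphism. -/
def padEquiv (j : Fin r) (N : ℕ) : FreeGroup (Fin r) ≃* FreeGroup (Fin r) :=
  MonoidHom.toMulEquiv (padHomF j N) (padHomG j N)
    (by
      refine FreeGroup.ext_hom _ _ fun i => ?_
      by_cases hij : i = j <;>
        simp [padHomF, padHomG, hij] <;> group)
    (by
      refine FreeGroup.ext_hom _ _ fun i => ?_
      by_cases hij : i = j <;>
        simp [padHomF, padHomG, hij] <;> group)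

lemma padEquiv_apply (j : Fin r) (N : ℕ) (x : FreeGroup (Fin r)) :
    padEquiv j N x = padHomF j N x := rfl

/-- The homomorphism inverting the `j`-th generator. -/
def invHom (j : Fin r) : FreeGroup (Fin r) →* FreeGroup (Fin r) :=
  FreeGroup.lift fun i => if i = j then (FreeGroup.of i)⁻¹ else FreeGroup.of i

/-- The automorphism inverting the `j`-th generator. -/
def invEquiv (j : Fin r) : FreeGroup (Fin r) ≃* FreeGroup (Fin r) :=
  MonoidHom.toMulEquiv (invHom j) (invHom j)
    (by
      refine FreeGroup.ext_hom _ _ fun i => ?_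
      by_cases hij : i = j <;> simp [invHom, hij])
    (by
      refine FreeGroup.ext_hom _ _ fun i => ?_
      by_cases hij : i = j <;> simp [invHom, hij])

lemma invEquiv_apply (j : Fin r) (x : FreeGroup (Fin r)) :
    invEquiv j x = invHom j x := rfl

end AllButOneAux

theorem allButOne_potPos (r : ℕ) (hr : 2 ≤ r) (w : FreeGroup (Fin r))
    (j : Fin r)
    (h : ∀ i : Fin r, i ≠ j → ((i, false) : Fin r × Bool) ∉ w.toWord) :
    PotPosFG w := by
  classical
  by_cases hall : ∀ p ∈ w.toWord, p.1 = j
  · obtain ⟨t, htb, ht⟩ := AllButOneAux.lemA j (MonoidHom.id _) rfl w.toWord hall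
    rw [FreeGroup.mk_toWord, MonoidHom.id_apply] at ht
    rcases le_or_gt 0 t with h0 | h0
    · exact ⟨MulEquiv.refl _, by
        rw [MulEquiv.refl_apply, ht]
        exact AllButOneAux.zpow_mem' j t h0⟩
    · refine ⟨AllButOneAux.invEquiv j, ?_⟩
      have hval : (AllButOneAux.invEquiv j) w = (FreeGroup.of j) ^ (-t) := by
        rw [AllButOneAux.invEquiv_apply, ht, _root_.map_zpow]
        simp [AllButOneAux.invHom, ← zpow_neg]
      rw [PositiveFG, hval]
      exact AllButOneAux.zpow_mem' j (-t) (by omega)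
  · push_neg at hall
    obtain ⟨p0, hp0, hp0j⟩ := hall
    set N := w.toWord.length with hN
    have hallowed : ∀ p ∈ w.toWord, p.2 = true ∨ p.1 = j := by
      rintro ⟨i, b⟩ hp
      by_cases hpj : i = j
      · exact Or.inr hpj
      · cases b with
        | true => exact Or.inl rfl
        | false => exact absurd hp (h i hpj)
    obtain ⟨t, htb, q, hq, ht⟩ :=
      AllButOneAux.lemB j N (AllButOneAux.padHomF j N)
        (AllButOneAux.padHomF_of_j j N) (AllButOneAux.padHomF_of_ne j N)
        w.toWord hallowed le_rfl ⟨p0, hp0, hp0j⟩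
    rw [FreeGroup.mk_toWord] at ht
    have ht0 : 0 ≤ t := by
      rw [← hN] at htb
      omega
    refine ⟨AllButOneAux.padEquiv j N, ?_⟩
    rw [PositiveFG, AllButOneAux.padEquiv_apply, ht]
    exact mul_mem (AllButOneAux.zpow_mem' j t ht0) hq
end

section
/- Let V be a finite nonempty type, E : V → V → Prop an edge relation, Σ a type, and η : V → Σ a labeling. Assume the automaton (V, E) is mixing: there exists N such that for every n ≥ N and every ordered pair of vertices x, y there is a path of length n starting at x and ending at y. Then η is one-to-constant if and only if there do not exist two distinct paths p ≠ q with the same first vertex, the same last vertex, and the same image (p.map η = q.map η). -/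
/-- A path in the automaton with edge relation `E` is a nonempty list of vertices,
consecutive entries of which are connected by edges. -/
def IsPath {V : Type*} (E : V → V → Prop) (p : List V) : Prop :=
  p ≠ [] ∧ p.Chain' E

/-- A path is closed if there is an edge from its last vertex back to its first vertex. -/
def IsClosedPath {V : Type*} (E : V → V → Prop) (p : List V) : Prop :=
  IsPath E p ∧ ∀ x ∈ p.getLast?, ∀ y ∈ p.head?, E x y

/-- The automaton is mixing: there is `N` such that for all `n ≥ N` and all ordered pairs
of vertices `x, y` there is a path of length `n` from `x` to `y`. -/
def Mixing {V : Type*} (E : V → V → Prop) : Prop :=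
  ∃ N : ℕ, ∀ n ≥ N, ∀ x y : V, ∃ p : List V,
    IsPath E p ∧ p.length = n ∧ p.head? = some x ∧ p.getLast? = some y

/-- The labeling `η` is one-to-constant: there is a constant `c` bounding, for every word `u`,
the number of closed paths whose image is `u`. -/
def OneToConstant {V Sig : Type*} (E : V → V → Prop) (η : V → Sig) : Prop :=
  ∃ c : ℕ, ∀ u : List Sig,
    Nat.card {p : List V // IsClosedPath E p ∧ p.map η = u} ≤ c

namespace OneToConstantAux

/-- `n`-fold concatenation of a list with itself. -/
def pw {α : Type*} (l : List α) : ℕ → List α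
  | 0 => []
  | n + 1 => l ++ pw l n

lemma pw_add {α : Type*} (l : List α) (a b : ℕ) : pw l (a + b) = pw l a ++ pw l b := by
  induction a with
  | zero => simp [pw]
  | succ a ih => rw [Nat.succ_add]; simp [pw, ih]

lemma pw_map {α β : Type*} (f : α → β) (l : List α) (n : ℕ) :
    (pw l n).map f = pw (l.map f) n := by
  induction n with
  | zero => simp [pw]
  | succ n ih => simp [pw, ih]

variable {V : Type*} (E : V → V → Prop)

/-- A "good block": a chain from `x` to `z`. -/
def Good (x z : V) (l : List V) : Prop :=
  l.head? = some x ∧ l.getLast? = some z ∧ l.Chain' E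

lemma Good.ne_nil {x z : V} {l : List V} (h : Good E x z l) : l ≠ [] := by
  intro hl
  rw [hl] at h
  simp [Good] at h

lemma good_append {x z : V} {u v : List V} (hE : E z x)
    (hu : Good E x z u) (hv : Good E x z v) : Good E x z (u ++ v) := by
  obtain ⟨hu1, hu2, hu3⟩ := hu
  obtain ⟨hv1, hv2, hv3⟩ := hv
  refine ⟨?_, ?_, ?_⟩
  · rw [List.head?_append_of_ne_nil u (by intro h; rw [h] at hu1; simp at hu1)]
    exact hu1
  · rw [List.getLast?_append, hv2]
    rfl
  · simp only [List.Chain', List.isChain_append]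
    refine ⟨hu3, hv3, ?_⟩
    intro a ha b hb
    rw [hu2] at ha
    rw [hv1] at hb
    simp at ha hb
    rw [← ha, ← hb]
    exact hE

lemma good_pw {x z : V} {u : List V} (hE : E z x) (hu : Good E x z u)
    (n : ℕ) (hn : 1 ≤ n) : Good E x z (pw u n) := by
  induction n with
  | zero => omega
  | succ n ih =>
    rcases Nat.eq_zero_or_pos n with h0 | hpos
    · subst h0; simpa [pw] using hu
    · exact good_append E hE hu (ih hpos)

lemma good_pw_append {x z : V} {u v : List V} (hE : E z x)
    (hu : Good E x z u) (hv : Good E x z v) (a b : ℕ) (hab : 1 ≤ a + b) :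
    Good E x z (pw u a ++ pw v b) := by
  rcases Nat.eq_zero_or_pos a with h0 | ha
  · subst h0; simpa [pw] using good_pw E hE hv b (by omega)
  rcases Nat.eq_zero_or_pos b with h0 | hb
  · subst h0; simpa [pw, List.append_nil] using good_pw E hE hu a ha
  exact good_append E hE (good_pw E hE hu a ha) (good_pw E hE hv b hb)

lemma Good.closed {x z : V} {l : List V} (hE : E z x) (h : Good E x z l) :
    IsClosedPath E l := by
  refine ⟨⟨h.ne_nil E, h.2.2⟩, ?_⟩
  intro a ha b hb
  rw [h.2.1] at ha
  rw [h.1] at hb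
  simp at ha hb
  rw [← ha, ← hb]
  exact hE

end OneToConstantAux

open OneToConstantAux in
theorem oneToConstant_iff {V Sig : Type*} [Finite V] [Nonempty V]
    (E : V → V → Prop) (η : V → Sig) (hmix : Mixing E) :
    OneToConstant E η ↔
      ¬ ∃ p q : List V, p ≠ q ∧ IsPath E p ∧ IsPath E q ∧
        p.head? = q.head? ∧ p.getLast? = q.getLast? ∧ p.map η = q.map η := by
  constructor
  · rintro ⟨c, hc⟩ ⟨p, q, hpq, hp, hq, hh, hl, hm⟩
    obtain ⟨N, hN⟩ := hmix
    obtain ⟨x, hx⟩ : ∃ x, p.head? = some x := ⟨p.head hp.1, List.head?_eq_head hp.1⟩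
    obtain ⟨y, hy⟩ : ∃ y, p.getLast? = some y :=
      ⟨p.getLast hp.1, List.getLast?_eq_getLast hp.1⟩
    have hqx : q.head? = some x := hh ▸ hx
    have hqy : q.getLast? = some y := hl ▸ hy
    -- a connecting path from y back to x, of length at least 3
    obtain ⟨r, hr, hrlen, hrh, hrl⟩ := hN (max N 3) (le_max_left _ _) y x
    have hrlen3 : 3 ≤ r.length := by rw [hrlen]; exact le_max_right _ _
    have hrne : r ≠ [] := by intro h; rw [h] at hrlen3; simp at hrlen3
    have hrtne : r.tail ≠ [] := by
      intro h
      have := List.length_tail (l := r)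
      rw [h] at this
      simp at this
      omega
    set t : List V := r.tail.dropLast with ht_def
    have htne : t ≠ [] := by
      intro h
      have h1 : t.length = r.tail.length - 1 := List.length_dropLast (xs := r.tail)
      have h2 : r.tail.length = r.length - 1 := List.length_tail (l := r)
      rw [h] at h1
      simp at h1
      omega
    -- decompose r = y :: (t ++ [x])
    have hr_eq : r = y :: (t ++ [r.tail.getLast hrtne]) := by
      have h2 : r.head hrne = y := by
        have h := List.head?_eq_head hrne
        rw [hrh] at h
        exact (Option.some.inj h).symm
      have h3 : t ++ [r.tail.getLast hrtne] = r.tail :=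
        List.dropLast_append_getLast hrtne
      rw [h3, ← h2]
      exact (List.cons_head_tail hrne).symm
    have hwx : r.tail.getLast hrtne = x := by
      have : r.getLast? = some (r.tail.getLast hrtne) := by
        conv_lhs => rw [hr_eq]
        rw [show (y :: (t ++ [r.tail.getLast hrtne])) =
          (y :: t) ++ [r.tail.getLast hrtne] by simp]
        exact List.getLast?_concat
      rw [hrl] at this
      exact (Option.some_injective _ this).symm
    rw [hwx] at hr_eq
    set z : V := t.getLast htne with hz_def
    have hz : t.getLast? = some z := List.getLast?_eq_getLast htne
    -- chain facts from r
    have hrchain : List.Chain' E (y :: (t ++ [x])) := by rw [← hr_eq]; exact hr.2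
    simp only [List.Chain', List.isChain_cons] at hrchain
    obtain ⟨hyh, hrest⟩ := hrchain
    rw [List.isChain_append] at hrest
    obtain ⟨htchain, _, hzx'⟩ := hrest
    have hEzx : E z x := by
      apply hzx' z hz x
      simp
    have hEyth : E y (t.head htne) := by
      apply hyh
      rw [List.head?_append_of_ne_nil t htne]
      exact List.head?_eq_head htne
    -- good blocks
    have hth : t.head? = some (t.head htne) := List.head?_eq_head htne
    have hB1 : Good E x z (p ++ t) := by
      refine ⟨?_, ?_, ?_⟩
      · rw [List.head?_append_of_ne_nil p hp.1]; exact hx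
      · rw [List.getLast?_append, hz]; rfl
      · simp only [List.Chain', List.isChain_append]
        refine ⟨hp.2, htchain, ?_⟩
        intro a ha b hb
        rw [hy] at ha; rw [hth] at hb
        simp at ha hb
        rw [← ha, ← hb]; exact hEyth
    have hB2 : Good E x z (q ++ t) := by
      refine ⟨?_, ?_, ?_⟩
      · rw [List.head?_append_of_ne_nil q hq.1]; exact hqx
      · rw [List.getLast?_append, hz]; rfl
      · simp only [List.Chain', List.isChain_append]
        refine ⟨hq.2, htchain, ?_⟩
        intro a ha b hb
        rw [hqy] at ha; rw [hth] at hb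
        simp at ha hb
        rw [← ha, ← hb]; exact hEyth
    have hlen : q.length = p.length := by
      have := congrArg List.length hm
      simpa using this.symm
    -- the family of closed paths
    set B1 : List V := p ++ t with hB1def
    set B2 : List V := q ++ t with hB2def
    set D : ℕ → List V := fun j => pw B2 j ++ pw B1 (c + 1 - j) with hD_def
    set u0 : List Sig := pw (B1.map η) (c + 1) with hu0_def
    have hDgood : ∀ j, j ≤ c + 1 → Good E x z (D j) := by
      intro j hj
      exact good_pw_append E hEzx hB2 hB1 j (c + 1 - j) (by omega)
    have hDim : ∀ j, j ≤ c + 1 → (D j).map η = u0 := by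
      intro j hj
      have hBm : B2.map η = B1.map η := by
        rw [hB1def, hB2def, List.map_append, List.map_append, hm]
      simp only [hD_def, List.map_append, pw_map, hBm]
      rw [← pw_add]
      congr 1
      omega
    -- injectivity
    have hD_inj : ∀ j j' : ℕ, j < j' → j' ≤ c + 1 → D j ≠ D j' := by
      intro j j' hlt hle heq
      have e1 : pw B2 j' = pw B2 j ++ pw B2 (j' - j) := by
        rw [← pw_add]; congr 1; omega
      have e2 : pw B1 (c + 1 - j) = pw B1 ((j' - j) + (c + 1 - j')) := by
        congr 1; omega
      rw [hD_def] at heq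
      simp only [e1, e2, pw_add, List.append_assoc] at heq
      have heq2 : pw B1 (j' - j) ++ pw B1 (c + 1 - j') =
          pw B2 (j' - j) ++ pw B1 (c + 1 - j') := List.append_cancel_left heq
      obtain ⟨d, hd⟩ : ∃ d, j' - j = d + 1 := ⟨j' - j - 1, by omega⟩
      rw [hd] at heq2
      have heq3 : p ++ (t ++ (pw B1 d ++ pw B1 (c + 1 - j'))) =
          q ++ (t ++ (pw B2 d ++ pw B1 (c + 1 - j'))) := by
        simpa [pw, hB1def, hB2def, List.append_assoc] using heq2
      have : p = q := by
        have hL := List.take_left (l₁ := p) (l₂ := t ++ (pw B1 d ++ pw B1 (c + 1 - j')))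
        have hR := List.take_left (l₁ := q) (l₂ := t ++ (pw B2 d ++ pw B1 (c + 1 - j')))
        rw [← hlen] at hL
        rw [← hL, heq3]
        rw [hlen] at hR ⊢
        exact hR
      exact hpq this
    -- package into the subtype and count
    have hfin : Finite {l : List V // IsClosedPath E l ∧ l.map η = u0} := by
      have hsub : {l : List V | IsClosedPath E l ∧ l.map η = u0} ⊆
          {l : List V | l.length = u0.length} := by
        intro l hl
        have := congrArg List.length hl.2
        simpa using this
      exact ((List.finite_length_eq V u0.length).subset hsub).to_subtype
    set f : Fin (c + 2) → {l : List V // IsClosedPath E l ∧ l.map η = u0} :=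
      fun j => ⟨D j.val, (hDgood j.val (by omega)).closed E hEzx,
        hDim j.val (by omega)⟩ with hf_def
    have hf_inj : Function.Injective f := by
      intro j j' hjj
      have hD : D j.val = D j'.val := congrArg Subtype.val hjj
      by_contra hne
      rcases lt_trichotomy j.val j'.val with h | h | h
      · exact hD_inj j.val j'.val h (by omega) hD
      · exact hne (Fin.ext h)
      · exact hD_inj j'.val j.val h (by omega) hD.symm
    have hcard := Nat.card_le_card_of_injective f hf_inj
    rw [Nat.card_eq_fintype_card, Fintype.card_fin] at hcard
    have := hc u0
    omega
  · intro hno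
    refine ⟨Nat.card (V × V), fun u => ?_⟩
    have hg : Function.Injective
        (fun (l : {l : List V // IsClosedPath E l ∧ l.map η = u}) =>
          ((l.val.head l.2.1.1.1, l.val.getLast l.2.1.1.1) : V × V)) := by
      rintro ⟨l1, h1⟩ ⟨l2, h2⟩ hg
      simp only [Prod.mk.injEq] at hg
      apply Subtype.ext
      by_contra hne
      exact hno ⟨l1, l2, hne, h1.1.1, h2.1.1,
        by rw [List.head?_eq_head h1.1.1.1, List.head?_eq_head h2.1.1.1, hg.1],
        by rw [List.getLast?_eq_getLast h1.1.1.1,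
          List.getLast?_eq_getLast h2.1.1.1, hg.2],
        h1.2.trans h2.2.symm⟩
    exact Nat.card_le_card_of_injective _ hg
end

section
/- Every element of R∞ is potentially positive; that is, every cyclically reduced w ∈ F₂ whose cyclic word contains no subword equal to a⁻¹b⁻¹, b⁻¹a⁻¹, or b⁻¹aᵏb⁻¹ for any k ≥ 0 is potentially positive. -/
abbrev F2 := FreeGroup (Fin 2)

def Positive2 (w : F2) : Prop :=
  w ∈ Submonoid.closure (Set.range (FreeGroup.of : Fin 2 → F2))

def PotPos2 (w : F2) : Prop := ∃ φ : F2 ≃* F2, Positive2 (φ w)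

def CyclicallyReduced2 (w : F2) : Prop :=
  ∀ x ∈ w.toWord.head?, ∀ y ∈ w.toWord.getLast?, x ≠ (y.1, !y.2)

/-- `u` occurs as a cyclic subword of `w`. -/
def CyclicSubword2 (u : List (Fin 2 × Bool)) (w : F2) : Prop :=
  u.length ≤ w.toWord.length ∧ u <:+: (w.toWord ++ w.toWord)

/-- The letters `a`, `a⁻¹`, `b`, `b⁻¹`. -/
def lA : Fin 2 × Bool := (0, true)
def lAi : Fin 2 × Bool := (0, false)
def lB : Fin 2 × Bool := (1, true)
def lBi : Fin 2 × Bool := (1, false)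

/-- The set `R∞` : cyclically reduced elements with no cyclic subword
`a⁻¹b⁻¹`, `b⁻¹a⁻¹` or `b⁻¹aᵏb⁻¹` (`k ≥ 0`). -/
def Rinf : Set F2 :=
  {w | CyclicallyReduced2 w ∧ ¬ CyclicSubword2 [lAi, lBi] w ∧ ¬ CyclicSubword2 [lBi, lAi] w ∧
    ∀ k : ℕ, ¬ CyclicSubword2 ([lBi] ++ List.replicate k lA ++ [lBi]) w}

namespace RinfAux
open FreeGroup List

abbrev x : F2 := FreeGroup.of 0
abbrev y : F2 := FreeGroup.of 1
abbrev Pos : Submonoid F2 := Submonoid.closure (Set.range (FreeGroup.of : Fin 2 → F2))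
lemma x_mem : x ∈ Pos := Submonoid.subset_closure ⟨0, rfl⟩
lemma y_mem : y ∈ Pos := Submonoid.subset_closure ⟨1, rfl⟩
lemma xy_mem : x * y ∈ Pos := mul_mem x_mem y_mem

lemma mk_lAi : FreeGroup.mk [lAi] = x⁻¹ := by
  rw [show [lAi] = FreeGroup.invRev [lA] by simp [FreeGroup.invRev, lA, lAi], ← FreeGroup.inv_mk]
  rfl
lemma mk_lBi : FreeGroup.mk [lBi] = y⁻¹ := by
  rw [show [lBi] = FreeGroup.invRev [lB] by simp [FreeGroup.invRev, lB, lBi], ← FreeGroup.inv_mk]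
  rfl
lemma mk_repl_lA (N : ℕ) : FreeGroup.mk (List.replicate N lA) = x ^ N := by
  induction N with
  | zero => rfl
  | succ n ih =>
    rw [List.replicate_succ, show lA :: List.replicate n lA = [lA] ++ List.replicate n lA
      from rfl, ← FreeGroup.mul_mk, ih, show FreeGroup.mk [lA] = x from rfl, pow_succ']
lemma mk_repl_lAi (N : ℕ) : FreeGroup.mk (List.replicate N lAi) = x⁻¹ ^ N := by
  induction N with
  | zero => rfl
  | succ n ih =>
    rw [List.replicate_succ, show lAi :: List.replicate n lAi = [lAi] ++ List.replicate n lAi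
      from rfl, ← FreeGroup.mul_mk, ih, mk_lAi, pow_succ']

/-- The key family of automorphisms: `a ↦ ab`, `b ↦ b(ab)^K`. -/
def fwd (K : ℕ) : F2 →* F2 := FreeGroup.lift ![x * y, y * (x * y) ^ K]
def bwd (K : ℕ) : F2 →* F2 := FreeGroup.lift ![x ^ (K + 1) * y⁻¹, y * (x ^ K)⁻¹]
lemma fwd_of0 (K : ℕ) : fwd K x = x * y := by simp [fwd]
lemma fwd_of1 (K : ℕ) : fwd K y = y * (x * y) ^ K := by simp [fwd]
lemma bwd_of0 (K : ℕ) : bwd K x = x ^ (K + 1) * y⁻¹ := by simp [bwd]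
lemma bwd_of1 (K : ℕ) : bwd K y = y * (x ^ K)⁻¹ := by simp [bwd]

lemma bwd_fwd (K : ℕ) : (bwd K).comp (fwd K) = MonoidHom.id F2 := by
  apply FreeGroup.ext_hom
  intro a
  fin_cases a <;>
    simp only [MonoidHom.coe_comp, Function.comp_apply, MonoidHom.id_apply]
  · show bwd K (fwd K x) = x
    rw [fwd_of0, _root_.map_mul, bwd_of0, bwd_of1]
    group
  · show bwd K (fwd K y) = y
    rw [fwd_of1, _root_.map_mul, _root_.map_pow, _root_.map_mul, bwd_of0, bwd_of1]
    group

lemma fwd_bwd (K : ℕ) : (fwd K).comp (bwd K) = MonoidHom.id F2 := by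
  apply FreeGroup.ext_hom
  intro a
  fin_cases a <;>
    simp only [MonoidHom.coe_comp, Function.comp_apply, MonoidHom.id_apply]
  · show fwd K (bwd K x) = x
    rw [bwd_of0, _root_.map_mul, _root_.map_pow, _root_.map_inv, fwd_of0, fwd_of1]
    group
  · show fwd K (bwd K y) = y
    rw [bwd_of1, _root_.map_mul, _root_.map_inv, _root_.map_pow, fwd_of1, fwd_of0]
    group

def eqv (K : ℕ) : F2 ≃* F2 where
  toFun := fwd K
  invFun := bwd K
  left_inv := fun w => by
    have := DFunLike.congr_fun (bwd_fwd K) w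
    simpa using this
  right_inv := fun w => by
    have := DFunLike.congr_fun (fwd_bwd K) w
    simpa using this
  map_mul' := (fwd K).map_mul

/-- The automorphism `a ↦ a⁻¹`, `b ↦ b`. -/
def negX : F2 →* F2 := FreeGroup.lift ![x⁻¹, y]
lemma negX_of0 : negX x = x⁻¹ := by simp [negX]
lemma negX_of1 : negX y = y := by simp [negX]
lemma negX_invol : negX.comp negX = MonoidHom.id F2 := by
  apply FreeGroup.ext_hom
  intro a
  fin_cases a <;>
    simp only [MonoidHom.coe_comp, Function.comp_apply, MonoidHom.id_apply]
  · show negX (negX x) = x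
    rw [negX_of0, _root_.map_inv, negX_of0, inv_inv]
  · show negX (negX y) = y
    rw [negX_of1, negX_of1]
def eqvNegX : F2 ≃* F2 where
  toFun := negX
  invFun := negX
  left_inv := fun w => by simpa using DFunLike.congr_fun negX_invol w
  right_inv := fun w => by simpa using DFunLike.congr_fun negX_invol w
  map_mul' := negX.map_mul

/-- The automorphism `a ↦ a`, `b ↦ b⁻¹`. -/
def negY : F2 →* F2 := FreeGroup.lift ![x, y⁻¹]
lemma negY_of0 : negY x = x := by simp [negY]
lemma negY_of1 : negY y = y⁻¹ := by simp [negY]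
lemma negY_invol : negY.comp negY = MonoidHom.id F2 := by
  apply FreeGroup.ext_hom
  intro a
  fin_cases a <;>
    simp only [MonoidHom.coe_comp, Function.comp_apply, MonoidHom.id_apply]
  · show negY (negY x) = x
    rw [negY_of0, negY_of0]
  · show negY (negY y) = y
    rw [negY_of1, _root_.map_inv, negY_of1, inv_inv]
def eqvNegY : F2 ≃* F2 where
  toFun := negY
  invFun := negY
  left_inv := fun w => by simpa using DFunLike.congr_fun negY_invol w
  right_inv := fun w => by simpa using DFunLike.congr_fun negY_invol w
  map_mul' := negY.map_mul

lemma fwd_mk_lA (K : ℕ) : fwd K (FreeGroup.mk [lA]) = x * y := fwd_of0 K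
lemma fwd_mk_lB (K : ℕ) : fwd K (FreeGroup.mk [lB]) = y * (x * y) ^ K := fwd_of1 K
lemma fwd_mk_lAi (K : ℕ) : fwd K (FreeGroup.mk [lAi]) = (x * y)⁻¹ := by
  rw [mk_lAi, _root_.map_inv, fwd_of0]
lemma fwd_mk_lBi (K : ℕ) : fwd K (FreeGroup.mk [lBi]) = ((x * y) ^ K)⁻¹ * y⁻¹ := by
  rw [mk_lBi, _root_.map_inv, fwd_of1, mul_inv_rev]

def St (K : ℕ) (L : List (Fin 2 × Bool)) (n : ℕ) : Prop :=
  ∃ P : F2, P ∈ Pos ∧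
  ( ((∃ M₁, L.take n = M₁ ++ [lB]) ∧ fwd K (FreeGroup.mk (L.take n)) = P * (x*y)^K)
  ∨ (∃ M₁ m, L.take n = M₁ ++ lB :: List.replicate (m+1) lA ∧
      fwd K (FreeGroup.mk (L.take n)) = P * (x*y)^(K+(m+1)))
  ∨ (∃ M₁ j t, L.take n = M₁ ++ lB :: List.replicate (j+1) lAi ∧ (j+1) + t = K ∧
      fwd K (FreeGroup.mk (L.take n)) = P * (x*y)^t)
  ∨ ((∃ M₁, L.take n = M₁ ++ [lBi]) ∧ fwd K (FreeGroup.mk (L.take n)) = P * x)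
  ∨ (∃ M₁ m, L.take n = M₁ ++ lBi :: List.replicate (m+1) lA ∧
      fwd K (FreeGroup.mk (L.take n)) = P * (x*y)^m) )

lemma infix_take {α : Type*} {L u : List α} {n : ℕ} (h : u <:+: L.take n) : u <:+: L :=
  h.trans (L.take_prefix n).isInfix


lemma pow_split (a : F2) (p q r : ℕ) (h : p = q + r) : a ^ p = a ^ q * a ^ r := by
  subst h; exact pow_add a q r

lemma stStep (K : ℕ) (L : List (Fin 2 × Bool))
    (hlen : L.length ≤ K)
    (hred : ∀ (i : Fin 2) (c : Bool), ¬ [(i, c), (i, !c)] <:+: L)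
    (h1 : ¬ [lAi, lBi] <:+: L)
    (h2 : ¬ [lBi, lAi] <:+: L)
    (h3 : ∀ k : ℕ, ¬ (lBi :: (List.replicate k lA ++ [lBi])) <:+: L)
    (n : ℕ) (hn : n < L.length) (h : St K L n) : St K L (n + 1) := by
  have htake : L.take (n+1) = L.take n ++ [L.get ⟨n, hn⟩] := by
    rw [List.take_succ]
    simp [List.getElem?_eq_getElem hn]
  have hlentake : (L.take n).length = n := by
    simp [List.length_take]; omega
  have hmul : fwd K (FreeGroup.mk (L.take (n+1)))
      = fwd K (FreeGroup.mk (L.take n)) * fwd K (FreeGroup.mk [L.get ⟨n, hn⟩]) := by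
    rw [htake, ← FreeGroup.mul_mk, _root_.map_mul]
  obtain ⟨P, hP, hc⟩ := h
  have hz4 : L.get ⟨n, hn⟩ = lA ∨ L.get ⟨n, hn⟩ = lAi ∨ L.get ⟨n, hn⟩ = lB ∨
      L.get ⟨n, hn⟩ = lBi := by
    rcases L.get ⟨n, hn⟩ with ⟨i, c⟩
    fin_cases i <;> cases c <;> simp [lA, lAi, lB, lBi]
  rcases hz4 with hz | hz | hz | hz <;> rw [hz] at htake hmul
  · -- z = lA
    rcases hc with ⟨⟨M₁,hM⟩,hv⟩ | ⟨M₁,m,hM,hv⟩ | ⟨M₁,j,t,hM,hjt,hv⟩ | ⟨⟨M₁,hM⟩,hv⟩ | ⟨M₁,m,hM,hv⟩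
    · refine ⟨P, hP, Or.inr (Or.inl ⟨M₁, 0, ?_, ?_⟩)⟩
      · rw [htake, hM]; simp
      · rw [hmul, hv, fwd_mk_lA, pow_split (x*y) (K+(0+1)) K 1 rfl]
        simp [mul_assoc]
    · refine ⟨P, hP, Or.inr (Or.inl ⟨M₁, m+1, ?_, ?_⟩)⟩
      · rw [htake, hM]; simp [List.replicate_succ']
      · rw [hmul, hv, fwd_mk_lA, pow_split (x*y) (K+(m+1+1)) (K+(m+1)) 1 (by omega)]
        simp [mul_assoc]
    · exact absurd (infix_take (show [lAi, lA] <:+: L.take (n+1) from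
        ⟨M₁ ++ lB :: List.replicate j lAi, [], by
          simp [htake, hM, List.replicate_succ']⟩))
        (by simpa [lA, lAi] using hred 0 false)
    · refine ⟨P * x * x * y, mul_mem (mul_mem (mul_mem hP x_mem) x_mem) y_mem,
        Or.inr (Or.inr (Or.inr (Or.inr ⟨M₁, 0, ?_, ?_⟩)))⟩
      · rw [htake, hM]; simp
      · rw [hmul, hv, fwd_mk_lA]
        simp [mul_assoc]
    · refine ⟨P, hP, Or.inr (Or.inr (Or.inr (Or.inr ⟨M₁, m+1, ?_, ?_⟩)))⟩
      · rw [htake, hM]; simp [List.replicate_succ']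
      · rw [hmul, hv, fwd_mk_lA, pow_succ, mul_assoc]
  · -- z = lAi
    rcases hc with ⟨⟨M₁,hM⟩,hv⟩ | ⟨M₁,m,hM,hv⟩ | ⟨M₁,j,t,hM,hjt,hv⟩ | ⟨⟨M₁,hM⟩,hv⟩ | ⟨M₁,m,hM,hv⟩
    · obtain ⟨t, ht⟩ : ∃ t, K = t + 1 := ⟨K-1, by omega⟩
      refine ⟨P, hP, Or.inr (Or.inr (Or.inl ⟨M₁, 0, t, ?_, by omega, ?_⟩))⟩
      · rw [htake, hM]; simp
      · rw [hmul, hv, fwd_mk_lAi, ht, pow_succ]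
        simp [mul_assoc]
    · exact absurd (infix_take (show [lA, lAi] <:+: L.take (n+1) from
        ⟨M₁ ++ lB :: List.replicate m lA, [], by
          simp [htake, hM, List.replicate_succ']⟩))
        (by simpa [lA, lAi] using hred 0 true)
    · have hlb : n = M₁.length + 1 + (j+1) := by
        rw [← hlentake, hM]; simp; omega
      have ht1 : 1 ≤ t := by omega
      obtain ⟨t', rfl⟩ : ∃ t', t = t' + 1 := ⟨t-1, by omega⟩
      refine ⟨P, hP, Or.inr (Or.inr (Or.inl ⟨M₁, j+1, t', ?_, by omega, ?_⟩))⟩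
      · rw [htake, hM]; simp [List.replicate_succ']
      · rw [hmul, hv, fwd_mk_lAi, pow_succ]
        simp [mul_assoc]
    · exact absurd (infix_take (show [lBi, lAi] <:+: L.take (n+1) from
        ⟨M₁, [], by simp [htake, hM]⟩)) h2
    · exact absurd (infix_take (show [lA, lAi] <:+: L.take (n+1) from
        ⟨M₁ ++ lBi :: List.replicate m lA, [], by
          simp [htake, hM, List.replicate_succ']⟩))
        (by simpa [lA, lAi] using hred 0 true)
  · -- z = lB
    rcases hc with ⟨⟨M₁,hM⟩,hv⟩ | ⟨M₁,m,hM,hv⟩ | ⟨M₁,j,t,hM,hjt,hv⟩ | ⟨⟨M₁,hM⟩,hv⟩ | ⟨M₁,m,hM,hv⟩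
    · refine ⟨P * (x*y)^K * y, mul_mem (mul_mem hP (pow_mem xy_mem K)) y_mem,
        Or.inl ⟨⟨L.take n, ?_⟩, ?_⟩⟩
      · rw [htake]
      · rw [hmul, hv, fwd_mk_lB]; simp [mul_assoc]
    · refine ⟨P * (x*y)^(K+(m+1)) * y, mul_mem (mul_mem hP (pow_mem xy_mem _)) y_mem,
        Or.inl ⟨⟨L.take n, ?_⟩, ?_⟩⟩
      · rw [htake]
      · rw [hmul, hv, fwd_mk_lB]; simp [mul_assoc]
    · refine ⟨P * (x*y)^t * y, mul_mem (mul_mem hP (pow_mem xy_mem _)) y_mem,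
        Or.inl ⟨⟨L.take n, ?_⟩, ?_⟩⟩
      · rw [htake]
      · rw [hmul, hv, fwd_mk_lB]; simp [mul_assoc]
    · exact absurd (infix_take (show [lBi, lB] <:+: L.take (n+1) from
        ⟨M₁, [], by simp [htake, hM]⟩))
        (by simpa [lB, lBi] using hred 1 false)
    · refine ⟨P * (x*y)^m * y, mul_mem (mul_mem hP (pow_mem xy_mem _)) y_mem,
        Or.inl ⟨⟨L.take n, ?_⟩, ?_⟩⟩
      · rw [htake]
      · rw [hmul, hv, fwd_mk_lB]; simp [mul_assoc]
  · -- z = lBi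
    rcases hc with ⟨⟨M₁,hM⟩,hv⟩ | ⟨M₁,m,hM,hv⟩ | ⟨M₁,j,t,hM,hjt,hv⟩ | ⟨⟨M₁,hM⟩,hv⟩ | ⟨M₁,m,hM,hv⟩
    · exact absurd (infix_take (show [lB, lBi] <:+: L.take (n+1) from
        ⟨M₁, [], by simp [htake, hM]⟩))
        (by simpa [lB, lBi] using hred 1 true)
    · refine ⟨P * (x*y)^m, mul_mem hP (pow_mem xy_mem m),
        Or.inr (Or.inr (Or.inr (Or.inl ⟨⟨L.take n, ?_⟩, ?_⟩)))⟩
      · rw [htake]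
      · rw [hmul, hv, fwd_mk_lBi, pow_split (x*y) (K+(m+1)) (m+1) K (by omega), pow_succ]
        simp [mul_assoc]
    · exact absurd (infix_take (show [lAi, lBi] <:+: L.take (n+1) from
        ⟨M₁ ++ lB :: List.replicate j lAi, [], by
          simp [htake, hM, List.replicate_succ']⟩)) h1
    · exact absurd (infix_take (show lBi :: (List.replicate 0 lA ++ [lBi]) <:+: L.take (n+1) from
        ⟨M₁, [], by simp [htake, hM]⟩)) (h3 0)
    · exact absurd (infix_take (show lBi :: (List.replicate (m+1) lA ++ [lBi]) <:+: L.take (n+1)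
        from ⟨M₁, [], by simp [htake, hM]⟩)) (h3 (m+1))

lemma machine (K : ℕ) (L : List (Fin 2 × Bool))
    (hlen : L.length ≤ K)
    (hhead : L.head? = some lB)
    (hred : ∀ (i : Fin 2) (c : Bool), ¬ [(i, c), (i, !c)] <:+: L)
    (h1 : ¬ [lAi, lBi] <:+: L)
    (h2 : ¬ [lBi, lAi] <:+: L)
    (h3 : ∀ k : ℕ, ¬ (lBi :: (List.replicate k lA ++ [lBi])) <:+: L) :
    fwd K (FreeGroup.mk L) ∈ Pos := by
  obtain ⟨L₀, rfl⟩ : ∃ L₀, L = lB :: L₀ := by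
    cases L with
    | nil => simp at hhead
    | cons a L₀ =>
      refine ⟨L₀, ?_⟩
      have : a = lB := by simpa using hhead
      rw [this]
  have base : St K (lB :: L₀) 1 := by
    refine ⟨y, y_mem, Or.inl ⟨⟨[], by simp⟩, ?_⟩⟩
    rw [show (lB :: L₀).take 1 = [lB] by simp, fwd_mk_lB]
  have main : ∀ n, n < (lB :: L₀).length → St K (lB :: L₀) (n+1) := by
    intro n
    induction n with
    | zero => intro _; exact base
    | succ k ih =>
      intro hk
      exact stStep K _ hlen hred h1 h2 h3 (k+1) hk (ih (by omega))
  have hfin := main ((lB :: L₀).length - 1) (by simp)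
  rw [show (lB :: L₀).length - 1 + 1 = (lB :: L₀).length by simp] at hfin
  obtain ⟨P, hP, hc⟩ := hfin
  rw [List.take_length] at hc
  rcases hc with ⟨_, hv⟩ | ⟨_, _, _, hv⟩ | ⟨_, _, _, _, _, hv⟩ | ⟨_, hv⟩ | ⟨_, _, _, hv⟩ <;>
    rw [hv]
  · exact mul_mem hP (pow_mem xy_mem _)
  · exact mul_mem hP (pow_mem xy_mem _)
  · exact mul_mem hP (pow_mem xy_mem _)
  · exact mul_mem hP x_mem
  · exact mul_mem hP (pow_mem xy_mem _)


abbrev R (p q : Fin 2 × Bool) : Prop := q ≠ (p.1, !p.2)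

lemma pair_of_chain' {α : Type*} {Rel : α → α → Prop} :
    ∀ {l : List α} {a b : α}, List.Chain' Rel l → [a, b] <:+: l → Rel a b := by
  intro l a b hch ⟨s, t, hst⟩
  induction s generalizing l with
  | nil =>
    subst hst
    exact (List.isChain_cons_cons.1 hch).1
  | cons c s ih =>
    subst hst
    exact ih (l := s ++ [a, b] ++ t) hch.tail rfl

lemma chain'_of_pairs {α : Type*} {Rel : α → α → Prop} :
    ∀ {l : List α}, (∀ a b s t, l = s ++ a :: b :: t → Rel a b) → List.Chain' Rel l := by
  intro l
  induction l with
  | nil => intro _; exact List.isChain_nil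
  | cons c rest ih =>
    intro h
    cases rest with
    | nil => exact List.isChain_singleton _
    | cons d r =>
      refine List.isChain_cons_cons.2 ⟨h c d [] r rfl, ih ?_⟩
      intro a b s t hst
      exact h a b (c :: s) t (by simp [hst])

lemma toWord_chain' (w : F2) : List.Chain' R w.toWord := by
  apply chain'_of_pairs
  rintro ⟨a1, a2⟩ b s t hst
  by_contra hb
  simp only [R, ne_eq, not_not] at hb
  apply FreeGroup.reduce.not (x := a1) (b := a2) (L₂ := s) (L₃ := t)
      (L₁ := w.toWord)
  rw [FreeGroup.reduce_toWord, hst, hb]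

lemma first_split {α : Type*} [DecidableEq α] (a : α) :
    ∀ (l : List α), a ∈ l → ∃ s t, l = s ++ a :: t ∧ a ∉ s := by
  intro l
  induction l with
  | nil => simp
  | cons c r ih =>
    intro h
    by_cases hc : c = a
    · exact ⟨[], r, by simp [hc], by simp⟩
    · have h' : a ∈ r := by
        rcases List.mem_cons.1 h with h1 | h1
        · exact absurd h1.symm hc
        · exact h1
      obtain ⟨s, t, hst, hns⟩ := ih h'
      exact ⟨c :: s, t, by simp [hst], by
        simp only [List.mem_cons, not_or]
        exact ⟨fun h2 => hc h2.symm, hns⟩⟩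

lemma all_eq_of_closed {α : Type*} {a : α} :
    ∀ {l : List α}, (∀ p q, [p, q] <:+: l → (p = a ↔ q = a)) → a ∈ l → ∀ z ∈ l, z = a := by
  intro l
  induction l with
  | nil => simp
  | cons c rest ih =>
    intro hcl hmem z hz
    have hsub : ∀ p q, [p, q] <:+: rest → (p = a ↔ q = a) := by
      intro p q hpq
      exact hcl p q (hpq.trans (List.suffix_cons c rest).isInfix)
    by_cases hc : c = a
    · subst hc
      rcases List.mem_cons.1 hz with rfl | hz'
      · rfl
      · cases rest with
        | nil => simp at hz'
        | cons d r =>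
          have : d = c := (hcl c d ⟨[], r, rfl⟩).1 rfl
          exact ih hsub (this ▸ (List.mem_cons_self : d ∈ d :: r)) z hz'
    · have ha' : a ∈ rest := by
        rcases List.mem_cons.1 hmem with h | h
        · exact absurd h.symm hc
        · exact h
      cases rest with
      | nil => simp at ha'
      | cons d r =>
        have hd : d = a := ih hsub ha' d (List.mem_cons_self : d ∈ d :: r)
        exact absurd ((hcl c d ⟨[], r, rfl⟩).2 hd) hc



lemma four_letters (z : Fin 2 × Bool) : z = lA ∨ z = lAi ∨ z = lB ∨ z = lBi := by
  obtain ⟨i, c⟩ := z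
  fin_cases i <;> cases c <;> simp [lA, lAi, lB, lBi]

end RinfAux

open RinfAux FreeGroup List in
theorem Rinf_potPos (w : F2) (hw : w ∈ Rinf) : PotPos2 w := by
  obtain ⟨hcyc, hq1, hq2, hq3⟩ := hw
  have hLL : w.toWord <:+: w.toWord ++ w.toWord := ⟨[], w.toWord, by simp⟩
  by_cases hb : lB ∈ w.toWord
  · -- main case : the word contains the letter b
    set L := w.toWord with hLdef
    set K := L.length with hK
    obtain ⟨n, hnlt, hgetn⟩ := List.mem_iff_getElem.1 hb
    set L' := L.drop n ++ L.take n with hL'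
    have hsplit : L.take n ++ L.drop n = L := List.take_append_drop n L
    have hdne : L.drop n ≠ [] := by
      intro hnil
      have := congrArg List.length hnil
      simp at this
      omega
    have hL'len : L'.length = L.length := by simp [hL']; omega
    have hL'inf : L' <:+: L ++ L := by
      refine ⟨L.take n, L.drop n, ?_⟩
      rw [hL']
      conv_rhs => rw [← hsplit]
      simp only [List.append_assoc]
    have hcyc_of : ∀ u : List (Fin 2 × Bool), u <:+: L' → CyclicSubword2 u w := by
      intro u hu
      refine ⟨?_, hu.trans hL'inf⟩
      exact hu.length_le.trans (le_of_eq hL'len)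
    have hchainL' : List.Chain' R L' := by
      have hparts := List.isChain_append.1 (show List.Chain' R (L.take n ++ L.drop n) by
        rw [hsplit]; exact toWord_chain' w)
      refine List.isChain_append.2 ⟨hparts.2.1, hparts.1, ?_⟩
      intro p hp q hq
      have htne : L.take n ≠ [] := by
        intro hnil; rw [hnil] at hq; simp at hq
      have hlast : p ∈ L.getLast? := by
        rw [← hsplit, List.getLast?_append_of_ne_nil _ hdne]; exact hp
      have hhead : q ∈ L.head? := by
        rw [← hsplit, List.head?_append_of_ne_nil _ htne]; exact hq
      exact hcyc q hhead p hlast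
    have hhead' : L'.head? = some lB := by
      rw [hL', List.head?_append_of_ne_nil _ hdne, List.head?_drop,
        List.getElem?_eq_getElem hnlt]
      exact congrArg some hgetn
    have hred' : ∀ (i : Fin 2) (c : Bool), ¬ [(i, c), (i, !c)] <:+: L' := by
      intro i c hinf
      exact (pair_of_chain' hchainL' hinf) rfl
    have h1' : ¬ [lAi, lBi] <:+: L' := fun h => hq1 (hcyc_of _ h)
    have h2'' : ¬ [lBi, lAi] <:+: L' := fun h => hq2 (hcyc_of _ h)
    have h3' : ∀ k, ¬ (lBi :: (List.replicate k lA ++ [lBi])) <:+: L' := by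
      intro k h
      exact hq3 k (hcyc_of _ (by simpa using h))
    have hmach := machine K L' (le_of_eq hL'len) hhead' hred' h1' h2'' h3'
    set g := FreeGroup.mk (L.take n) with hg
    have hconj : g⁻¹ * w * g = FreeGroup.mk L' := by
      have hw' : w = FreeGroup.mk (L.take n) * FreeGroup.mk (L.drop n) := by
        rw [FreeGroup.mul_mk, hsplit]
        exact (FreeGroup.mk_toWord).symm
      rw [hL', ← FreeGroup.mul_mk, hg, hw']
      group
    refine ⟨(MulAut.conj g⁻¹).trans (eqv K), ?_⟩
    show _ ∈ Pos
    have heq : ((MulAut.conj g⁻¹).trans (eqv K)) w = fwd K (g⁻¹ * w * g) := by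
      simp [MulEquiv.trans_apply, eqv, MulAut.conj_apply]
    rw [heq, hconj]
    exact hmach
  · by_cases hai : lAi ∈ w.toWord
    · -- all letters are a⁻¹
      have hall : ∀ z ∈ w.toWord, z = lAi := by
        refine all_eq_of_closed ?_ hai
        intro p q hpq
        have hpm : p ∈ w.toWord := hpq.subset (by simp)
        have hqm : q ∈ w.toWord := hpq.subset (by simp)
        have hch := toWord_chain' w
        constructor
        · rintro rfl
          rcases four_letters q with rfl | rfl | rfl | rfl
          · exact absurd rfl (pair_of_chain' hch hpq)
          · rfl
          · exact absurd hqm hb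
          · exact absurd (⟨hpq.length_le, hpq.trans hLL⟩ : CyclicSubword2 [lAi, lBi] w) hq1
        · rintro rfl
          rcases four_letters p with rfl | rfl | rfl | rfl
          · exact absurd rfl (pair_of_chain' hch hpq)
          · rfl
          · exact absurd hpm hb
          · exact absurd (⟨hpq.length_le, hpq.trans hLL⟩ : CyclicSubword2 [lBi, lAi] w) hq2
      have hrep : w.toWord = List.replicate w.toWord.length lAi :=
        List.eq_replicate_length.2 hall
      have hwv : w = x⁻¹ ^ (w.toWord.length) := by
        conv_lhs => rw [← FreeGroup.mk_toWord (x := w)]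
        rw [show FreeGroup.mk w.toWord = FreeGroup.mk (List.replicate w.toWord.length lAi) from
          congrArg _ hrep, mk_repl_lAi]
      refine ⟨eqvNegX, ?_⟩
      show negX w ∈ Pos
      rw [hwv, _root_.map_pow, _root_.map_inv, negX_of0, inv_inv]
      exact pow_mem x_mem _
    · have hAorBi : ∀ z ∈ w.toWord, z = lA ∨ z = lBi := by
        intro z hz
        rcases four_letters z with rfl | rfl | rfl | rfl
        · exact Or.inl rfl
        · exact absurd hz hai
        · exact absurd hz hb
        · exact Or.inr rfl
      by_cases hbi : lBi ∈ w.toWord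
      · obtain ⟨s, t, hst, hns⟩ := first_split lBi w.toWord hbi
        by_cases hbt : lBi ∈ t
        · exfalso
          obtain ⟨t₁, t₂, ht, hnt⟩ := first_split lBi t hbt
          have ht₁ : t₁ = List.replicate t₁.length lA := by
            refine List.eq_replicate_length.2 ?_
            intro b hbmem
            have hbL : b ∈ w.toWord := by rw [hst, ht]; simp [hbmem]
            rcases hAorBi b hbL with rfl | rfl
            · rfl
            · exact absurd hbmem hnt
          apply hq3 t₁.length
          constructor
          · have h1l := congrArg List.length hst
            have h2l := congrArg List.length ht
            simp only [List.length_append, List.length_cons] at h1l h2l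
            simp only [List.length_append, List.length_cons, List.length_replicate,
              List.length_nil]
            omega
          · refine List.IsInfix.trans ⟨s, t₂, ?_⟩ hLL
            rw [hst, ht, ← ht₁]
            simp
        · have hs : s = List.replicate s.length lA := by
            refine List.eq_replicate_length.2 ?_
            intro b hbm
            have : b ∈ w.toWord := by rw [hst]; simp [hbm]
            rcases hAorBi b this with rfl | rfl
            · rfl
            · exact absurd hbm hns
          have ht' : t = List.replicate t.length lA := by
            refine List.eq_replicate_length.2 ?_
            intro b hbm
            have : b ∈ w.toWord := by rw [hst]; simp [hbm]
            rcases hAorBi b this with rfl | rfl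
            · rfl
            · exact absurd hbm hbt
          have hwv : w = x ^ s.length * y⁻¹ * x ^ t.length := by
            conv_lhs => rw [← FreeGroup.mk_toWord (x := w), hst]
            rw [show s ++ lBi :: t = s ++ ([lBi] ++ t) from rfl, ← FreeGroup.mul_mk,
              ← FreeGroup.mul_mk]
            rw [show FreeGroup.mk s = FreeGroup.mk (List.replicate s.length lA) from
              congrArg _ hs, mk_repl_lA, mk_lBi,
              show FreeGroup.mk t = FreeGroup.mk (List.replicate t.length lA) from
              congrArg _ ht', mk_repl_lA, mul_assoc]
          set g : F2 := x ^ s.length with hg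
          have hcval : g⁻¹ * w * g = y⁻¹ * x ^ (t.length + s.length) := by
            rw [hwv, hg, pow_add]
            group
          refine ⟨(MulAut.conj g⁻¹).trans eqvNegY, ?_⟩
          show _ ∈ Pos
          have heq : ((MulAut.conj g⁻¹).trans eqvNegY) w = negY (g⁻¹ * w * g) := by
            simp [MulEquiv.trans_apply, eqvNegY, MulAut.conj_apply]
          rw [heq, hcval, _root_.map_mul, _root_.map_inv, _root_.map_pow, negY_of1,
            negY_of0, inv_inv]
          exact mul_mem y_mem (pow_mem x_mem _)
      · have hall : ∀ z ∈ w.toWord, z = lA := by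
          intro z hz
          rcases hAorBi z hz with rfl | rfl
          · rfl
          · exact absurd hz hbi
        have hwv : w = x ^ (w.toWord.length) := by
          conv_lhs => rw [← FreeGroup.mk_toWord (x := w)]
          rw [show FreeGroup.mk w.toWord
              = FreeGroup.mk (List.replicate w.toWord.length lA) from
            congrArg _ (List.eq_replicate_length.2 hall), mk_repl_lA]
        refine ⟨MulEquiv.refl F2, ?_⟩
        show w ∈ Pos
        rw [hwv]
        exact pow_mem x_mem _
end

section
/- Let r ≥ 2 and let PP be the set of potentially positive elements of F_r. Then PP is not exponentially generic in F_r: there is no constant C > 1 such that the density function of the complement, n ↦ (𝔤_n(F_r ∖ PP) + 1) / (𝔤_n(F_r) + 1), is O(C⁻ⁿ) (i.e., there do not exist C > 1, K > 0 and m with (𝔤_n(F_r ∖ PP)+1)/(𝔤_n(F_r)+1) ≤ K·C⁻ⁿ for all n ≥ m). -/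
namespace NPPaux
open List
set_option linter.unusedSectionVars false
open FreeGroup List

variable {α : Type*} [DecidableEq α]

/-- non-cancelling adjacency -/
def NC : (α × Bool) → (α × Bool) → Prop := fun a b => ¬(a.1 = b.1 ∧ a.2 = !b.2)

lemma chain'_reduce (l : List (α × Bool)) : (FreeGroup.reduce l).IsChain NC := by
  induction l with
  | nil => simp
  | cons x l ih =>
    rw [FreeGroup.reduce.cons]
    rcases h : FreeGroup.reduce l with _ | ⟨hd, tl⟩
    · simp
    · rw [h] at ih
      by_cases hc : x.1 = hd.1 ∧ x.2 = !hd.2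
      · simpa [hc] using ih.tail
      · simpa [hc] using List.isChain_cons_cons.mpr ⟨hc, ih⟩

lemma reduce_eq_self {l : List (α × Bool)} (h : l.IsChain NC) : FreeGroup.reduce l = l := by
  induction l with
  | nil => rfl
  | cons x l ih =>
    have ht := ih h.tail
    rw [FreeGroup.reduce.cons, ht]
    rcases l with _ | ⟨hd, tl⟩
    · rfl
    · have hx : NC x hd := (List.isChain_cons_cons.mp h).1
      simp [NC] at hx
      by_cases h1 : x.1 = hd.1
      · simp [h1, hx h1]
      · simp [h1]

lemma toWord_mk_self {l : List (α × Bool)} (h : l.IsChain NC) : (FreeGroup.mk l).toWord = l := by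
  rw [FreeGroup.toWord_mk, reduce_eq_self h]

lemma norm_mk_self {l : List (α × Bool)} (h : l.IsChain NC) : (FreeGroup.mk l).norm = l.length := by
  rw [FreeGroup.norm, toWord_mk_self h]

lemma chain'_toWord (w : FreeGroup α) : w.toWord.IsChain NC := by
  rw [← FreeGroup.reduce_toWord]; exact chain'_reduce _


variable {α : Type*} [DecidableEq α] [Finite α]

noncomputable instance fintypeNorm (n : ℕ) : Finite {w : FreeGroup α // w.norm = n} := by
  have : Function.Injective (fun w : {w : FreeGroup α // w.norm = n} =>
      (fun i : Fin n => w.1.toWord.get (i.cast w.2.symm))) := by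
    intro u v huv
    have hlu : u.1.toWord.length = n := u.2
    have hlv : v.1.toWord.length = n := v.2
    apply Subtype.ext
    apply FreeGroup.toWord_injective
    apply List.ext_get (hlu.trans hlv.symm)
    intro i h1 h2
    have := congrFun huv ⟨i, by omega⟩
    exact this
  exact Finite.of_injective _ this

lemma finite_of_norm (P : FreeGroup α → Prop) (n : ℕ) :
    Finite {w : FreeGroup α // P w ∧ w.norm = n} :=
  Finite.of_injective (fun w => (⟨w.1, w.2.2⟩ : {w : FreeGroup α // w.norm = n}))
    (fun u v h => Subtype.ext (congrArg Subtype.val h :))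

/-- generic pigeonhole -/
lemma pigeon {A B : Type*} [Finite A] [Finite B] [Nonempty B] (f : A → B) :
    ∃ b : B, Nat.card A ≤ Nat.card B * Nat.card {a : A // f a = b} := by
  cases nonempty_fintype B
  have := Fintype.ofFinite A
  classical
  obtain ⟨b, -, hb⟩ := Finset.exists_max_image Finset.univ
    (fun b => Nat.card {a : A // f a = b}) ⟨Classical.arbitrary B, Finset.mem_univ _⟩
  refine ⟨b, ?_⟩
  have h1 : Nat.card A = ∑ b : B, Nat.card {a : A // f a = b} := by
    have := Nat.card_congr (Equiv.sigmaFiberEquiv f).symm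
    rw [this, Nat.card_eq_fintype_card, Fintype.card_sigma]
    exact Finset.sum_congr rfl fun c _ => Nat.card_eq_fintype_card.symm
  rw [h1]
  calc ∑ c : B, Nat.card {a : A // f a = c} ≤ ∑ _c : B, Nat.card {a : A // f a = b} :=
        Finset.sum_le_sum (fun c _ => hb c (Finset.mem_univ c))
    _ = Nat.card B * Nat.card {a : A // f a = b} := by
        rw [Finset.sum_const, Nat.card_eq_fintype_card]; simp [mul_comm]


variable {r : ℕ}

/-- abelianization hom -/
def abh (r : ℕ) : FreeGroup (Fin r) →* Multiplicative (Fin r → ℤ) :=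
  FreeGroup.lift fun i => Multiplicative.ofAdd (Pi.single i 1)

lemma abh_of (i : Fin r) : abh r (FreeGroup.of i) = Multiplicative.ofAdd (Pi.single i 1) :=
  FreeGroup.lift_apply_of

lemma mk_single_true (j : Fin r) : FreeGroup.mk [(j, true)] = FreeGroup.of j := rfl

lemma mk_single_false (j : Fin r) : FreeGroup.mk [(j, false)] = (FreeGroup.of j)⁻¹ := by
  rw [← mk_single_true, FreeGroup.inv_mk]
  rfl

lemma abh_mk_bound (l : List (Fin r × Bool)) (i : Fin r) :
    |Multiplicative.toAdd (abh r (FreeGroup.mk l)) i| ≤ l.length := by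
  induction l with
  | nil =>
    have : FreeGroup.mk ([] : List (Fin r × Bool)) = 1 := rfl
    simp [this]
  | cons a l ih =>
    have h1 : FreeGroup.mk (a :: l) = FreeGroup.mk [a] * FreeGroup.mk l := by
      rw [FreeGroup.mul_mk]; rfl
    have h2 : |Multiplicative.toAdd (abh r (FreeGroup.mk [a])) i| ≤ 1 := by
      rcases a with ⟨j, b⟩
      cases b
      · rw [mk_single_false, _root_.map_inv, abh_of]
        simp [Pi.single_apply]
        split <;> simp
      · rw [mk_single_true, abh_of]
        simp [Pi.single_apply]
        split <;> simp
    rw [h1, _root_.map_mul]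
    have : Multiplicative.toAdd (abh r (FreeGroup.mk [a]) * abh r (FreeGroup.mk l)) i
        = Multiplicative.toAdd (abh r (FreeGroup.mk [a])) i
          + Multiplicative.toAdd (abh r (FreeGroup.mk l)) i := rfl
    rw [this]
    refine le_trans (abs_add_le _ _) ?_
    have hlen : (((a :: l).length : ℕ) : ℤ) = 1 + l.length := by simp [add_comm]
    rw [hlen]
    exact add_le_add h2 ih

lemma abh_norm_bound (w : FreeGroup (Fin r)) (i : Fin r) :
    |Multiplicative.toAdd (abh r w) i| ≤ w.norm := by
  conv_lhs => rw [← FreeGroup.mk_toWord (x := w)]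
  exact abh_mk_bound _ i

/-- any hom to ℤ kills elements killed by abh -/
lemma hom_eq_one_of_abh (f : FreeGroup (Fin r) →* Multiplicative ℤ)
    {w : FreeGroup (Fin r)} (hw : abh r w = 1) : f w = 1 := by
  classical
  set gadd : (Fin r → ℤ) →+ ℤ :=
    { toFun := fun v => ∑ j, v j * Multiplicative.toAdd (f (FreeGroup.of j))
      map_zero' := by simp
      map_add' := by
        intro x y
        rw [← Finset.sum_add_distrib]
        exact Finset.sum_congr rfl fun j _ => by simp [add_mul] } with hgadd
  set G : Multiplicative (Fin r → ℤ) →* Multiplicative ℤ :=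
    AddMonoidHom.toMultiplicative gadd with hG
  have hfac : f = G.comp (abh r) := by
    apply FreeGroup.ext_hom
    intro a
    have hga : gadd (Pi.single a 1) = Multiplicative.toAdd (f (FreeGroup.of a)) := by
      rw [hgadd]
      simp only [AddMonoidHom.coe_mk, ZeroHom.coe_mk]
      rw [Finset.sum_eq_single a]
      · simp
      · intro b _ hb; simp [Pi.single_apply, Ne.symm hb]
      · simp
    have : G (abh r (FreeGroup.of a)) = f (FreeGroup.of a) := by
      rw [abh_of, hG]
      show Multiplicative.ofAdd (gadd (Pi.single a 1)) = f (FreeGroup.of a)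
      rw [hga]; simp
    simpa using this.symm
  rw [hfac]
  show G (abh r w) = 1
  rw [hw, _root_.map_one]

lemma not_potpos {w : FreeGroup (Fin r)} (hw : w ≠ 1) (h1 : abh r w = 1) : ¬ PotPosFG w := by
  rintro ⟨φ, hpos⟩
  obtain ⟨l, hl, hprod⟩ := Submonoid.exists_list_of_mem_closure hpos
  set sig : FreeGroup (Fin r) →* Multiplicative ℤ :=
    FreeGroup.lift fun _ => Multiplicative.ofAdd 1 with hsigdef
  have hsig : sig (φ w) = Multiplicative.ofAdd (l.length : ℤ) := by
    rw [← hprod]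
    clear hprod
    induction l with
    | nil => simp
    | cons a l ih =>
      have ha := hl a (by simp)
      obtain ⟨j, rfl⟩ := Set.mem_range.mp ha
      rw [List.prod_cons, _root_.map_mul, ih (fun y hy => hl y (by simp [hy]))]
      have : sig (FreeGroup.of j) = Multiplicative.ofAdd 1 := FreeGroup.lift_apply_of
      rw [this, ← ofAdd_add]
      congr 1
      simp [add_comm]
  have hone : sig (φ w) = 1 := hom_eq_one_of_abh (sig.comp φ.toMonoidHom) h1
  rw [hone] at hsig
  have : (l.length : ℤ) = 0 := by
    have := congrArg Multiplicative.toAdd hsig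
    simpa using this.symm
  have hl0 : l = [] := by simpa using this
  rw [hl0] at hprod
  simp at hprod
  exact hw (φ.injective (by rw [← hprod, _root_.map_one]))

section Counting
open Multiplicative

/-- count of elements of given norm -/
noncomputable def Tc (r n : ℕ) : ℕ := Nat.card {w : FreeGroup (Fin r) // w.norm = n}

noncomputable def Nc (r n : ℕ) : ℕ :=
  Nat.card {w : FreeGroup (Fin r) // ¬ PotPosFG w ∧ w.norm = n}

lemma Tc_pos (r : ℕ) (hr : 1 ≤ r) (n : ℕ) : 1 ≤ Tc r n := by
  have : Nonempty {w : FreeGroup (Fin r) // w.norm = n} :=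
    ⟨⟨FreeGroup.of (⟨0, hr⟩ : Fin r) ^ n, FreeGroup.norm_of_pow _ n⟩⟩
  exact Nat.card_pos

lemma Tc_le_pow (r k : ℕ) : Tc r k ≤ (2 * r) ^ k := by
  have h : Nat.card (Fin k → Fin r × Bool) = (2 * r) ^ k := by
    rw [Nat.card_eq_fintype_card]
    simp [Fintype.card_fun, mul_comm]
  rw [Tc, ← h]
  apply Nat.card_le_card_of_injective
    (fun w : {w : FreeGroup (Fin r) // w.norm = k} =>
      (fun i : Fin k => w.1.toWord.get (i.cast w.2.symm)))
  intro u v huv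
  have hlu : u.1.toWord.length = k := u.2
  have hlv : v.1.toWord.length = k := v.2
  apply Subtype.ext
  apply FreeGroup.toWord_injective
  apply List.ext_get (hlu.trans hlv.symm)
  intro idx h1 h2
  have := congrFun huv ⟨idx, by omega⟩
  exact this

lemma Tc_split (r a b : ℕ) : Tc r (a + b) ≤ Tc r a * Tc r b := by
  have h : Nat.card ({w : FreeGroup (Fin r) // w.norm = a} ×
      {w : FreeGroup (Fin r) // w.norm = b}) = Tc r a * Tc r b := Nat.card_prod _ _
  rw [Tc, ← h]
  have key : ∀ w : {w : FreeGroup (Fin r) // w.norm = a + b},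
      (FreeGroup.mk (w.1.toWord.take a)).norm = a ∧
      (FreeGroup.mk (w.1.toWord.drop a)).norm = b ∧
      (FreeGroup.mk (w.1.toWord.take a)).toWord = w.1.toWord.take a ∧
      (FreeGroup.mk (w.1.toWord.drop a)).toWord = w.1.toWord.drop a := by
    intro w
    have hlen : w.1.toWord.length = a + b := w.2
    have hc := chain'_toWord w.1
    have ht := toWord_mk_self (hc.take a)
    have hd := toWord_mk_self (hc.drop a)
    refine ⟨?_, ?_, ht, hd⟩
    · rw [norm_mk_self (hc.take a), List.length_take]; omega
    · rw [norm_mk_self (hc.drop a), List.length_drop]; omega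
  apply Nat.card_le_card_of_injective
    (fun w : {w : FreeGroup (Fin r) // w.norm = a + b} =>
      (⟨FreeGroup.mk (w.1.toWord.take a), (key w).1⟩,
       ⟨FreeGroup.mk (w.1.toWord.drop a), (key w).2.1⟩))
  intro u v huv
  obtain ⟨h1, h2⟩ := Prod.mk.injEq _ _ _ _ ▸ huv
  have e1 : u.1.toWord.take a = v.1.toWord.take a := by
    have := congrArg (fun z => FreeGroup.toWord z.1) h1
    simpa [(key u).2.2.1, (key v).2.2.1] using this
  have e2 : u.1.toWord.drop a = v.1.toWord.drop a := by
    have := congrArg (fun z => FreeGroup.toWord z.1) h2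
    simpa [(key u).2.2.2, (key v).2.2.2] using this
  apply Subtype.ext
  apply FreeGroup.toWord_injective
  rw [← List.take_append_drop a u.1.toWord, e1, e2, List.take_append_drop]

variable {r : ℕ}

/-- words of length p+1 with a good last letter -/
def Wt (r p : ℕ) (i j : Fin r) : Type :=
  {w : FreeGroup (Fin r) // w.norm = p + 1 ∧
    ∀ a ∈ w.toWord.getLast?, a ≠ (i, false) ∧ a ≠ (j, false)}

noncomputable instance WtFinite (p : ℕ) (i j : Fin r) : Finite (Wt r p i j) :=
  Finite.of_injective
    (fun w : Wt r p i j => (⟨w.1, w.2.1⟩ : {w : FreeGroup (Fin r) // w.norm = p + 1}))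
    (fun u v h => Subtype.ext (congrArg Subtype.val h :))

lemma Tc_le_Wt (p : ℕ) (i j : Fin r) (hij : i ≠ j) :
    Tc r p ≤ Nat.card (Wt r p i j) := by
  classical
  have key : ∀ w : {w : FreeGroup (Fin r) // w.norm = p},
      ∃ z : Wt r p i j, z.1.toWord =
        w.1.toWord ++ [if w.1.toWord.getLast? = some (i, false) then (j, true) else (i, true)] := by
    intro w
    set b : Fin r × Bool :=
      if w.1.toWord.getLast? = some (i, false) then (j, true) else (i, true) with hb
    have hchain : (w.1.toWord ++ [b]).IsChain NC := by
      rw [List.isChain_append]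
      refine ⟨chain'_toWord _, by simp, ?_⟩
      intro x hx y hy
      simp only [List.head?_cons, Option.mem_some_iff] at hy
      subst hy
      by_cases hc : w.1.toWord.getLast? = some (i, false)
      · have hx' : x = (i, false) := by
          rw [hc] at hx; simpa using hx.symm
        rw [hb]
        simp only [if_pos hc]
        rintro ⟨h1, -⟩
        rw [hx'] at h1
        exact hij h1
      · have hx' : x ≠ (i, false) := by
          intro h; exact hc (h ▸ hx)
        rw [hb]
        simp only [if_neg hc]
        rintro ⟨h1, h2⟩
        simp only [Bool.not_true] at h2
        exact hx' (Prod.ext h1 h2)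
    refine ⟨⟨FreeGroup.mk (w.1.toWord ++ [b]), ?_, ?_⟩, ?_⟩
    · rw [norm_mk_self hchain]
      have : w.1.toWord.length = p := w.2
      simp [this]
    · rw [toWord_mk_self hchain]
      intro a ha
      rw [List.getLast?_concat] at ha
      simp only [Option.mem_some_iff] at ha
      subst ha
      rw [hb]
      constructor <;> (split <;> simp)
    · rw [toWord_mk_self hchain]
  choose f hf using key
  apply Nat.card_le_card_of_injective f
  intro u v huv
  have := congrArg (fun z => z.1.toWord) huv
  rw [hf u, hf v] at this
  have h2 := congrArg List.dropLast this
  simp only [List.dropLast_concat] at h2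
  apply Subtype.ext
  exact FreeGroup.toWord_injective h2

lemma pigeon_Wt (p : ℕ) (i j : Fin r) (hij : i ≠ j) :
    ∃ v : Fin r → ℤ, Tc r p ≤ (2 * p + 3) ^ r *
      Nat.card {w : Wt r p i j // Multiplicative.toAdd (abh r w.1) = v} := by
  classical
  have hbound : ∀ w : Wt r p i j, ∀ k : Fin r,
      (Multiplicative.toAdd (abh r w.1) k + (p + 1)).toNat < 2 * p + 3 := by
    intro w k
    have := abh_norm_bound w.1 k
    rw [w.2.1, abs_le] at this
    push_cast at this
    omega
  obtain ⟨b, hb⟩ := pigeon (B := Fin r → Fin (2 * p + 3))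
    (fun w : Wt r p i j => fun k => ⟨_, hbound w k⟩)
  refine ⟨fun k => (b k : ℤ) - (p + 1), ?_⟩
  have hcardB : Nat.card (Fin r → Fin (2 * p + 3)) = (2 * p + 3) ^ r := by
    rw [Nat.card_eq_fintype_card]; simp
  have hfib : Nat.card {w : Wt r p i j // (fun k =>
        (⟨_, hbound w k⟩ : Fin (2*p+3))) = b}
      = Nat.card {w : Wt r p i j //
        Multiplicative.toAdd (abh r w.1) = fun k => (b k : ℤ) - (p + 1)} := by
    apply Nat.card_congr
    apply Equiv.subtypeEquivRight
    intro w
    constructor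
    · intro h
      funext k
      have := congrArg (fun g => (g k : ℕ)) h
      simp only at this
      have hbk : ((b k : ℕ) : ℤ) = Multiplicative.toAdd (abh r w.1) k + (p+1) := by
        rw [← this]
        have := abh_norm_bound w.1 k
        rw [w.2.1, abs_le] at this
        push_cast at this
        omega
      omega
    · intro h
      funext k
      have := congrFun h k
      apply Fin.ext
      simp only
      omega
  calc Tc r p ≤ Nat.card (Wt r p i j) := Tc_le_Wt p i j hij
    _ ≤ _ := by rw [← hcardB, ← hfib]; exact hb
lemma head?_invRev (l : List (Fin r × Bool)) :
    (FreeGroup.invRev l).head? = l.getLast?.map (fun a => (a.1, !a.2)) := by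
  rw [FreeGroup.invRev, List.head?_reverse, List.getLast?_map]

lemma mk_c_eq (i j : Fin r) :
    FreeGroup.mk [(j, true), (i, true), (j, false), (i, false)]
      = FreeGroup.of j * FreeGroup.of i * (FreeGroup.of j)⁻¹ * (FreeGroup.of i)⁻¹ := by
  rw [← mk_single_false i, ← mk_single_false j, ← mk_single_true i, ← mk_single_true j,
    FreeGroup.mul_mk, FreeGroup.mul_mk, FreeGroup.mul_mk]
  rfl

lemma pair_le_Nc (p : ℕ) (i j : Fin r) (hij : i ≠ j) (v : Fin r → ℤ) :
    Nat.card {w : Wt r p i j // Multiplicative.toAdd (abh r w.1) = v} ^ 2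
      ≤ Nc r (2 * p + 6) := by
  classical
  set c : List (Fin r × Bool) := [(j, true), (i, true), (j, false), (i, false)] with hc
  have habhc : abh r (FreeGroup.mk c) = 1 := by
    rw [hc, mk_c_eq i j]
    simp only [_root_.map_mul, _root_.map_inv]
    set A := abh r (FreeGroup.of j)
    set B := abh r (FreeGroup.of i)
    rw [mul_comm A B]
    group
  have hcchain : c.IsChain NC := by
    rw [hc]
    refine List.isChain_cons_cons.mpr ⟨?_, List.isChain_cons_cons.mpr ⟨?_, List.isChain_cons_cons.mpr ⟨?_, by simp⟩⟩⟩
    · rintro ⟨-, h2⟩; simp at h2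
    · rintro ⟨h1, -⟩; exact hij h1
    · rintro ⟨-, h2⟩; simp at h2
  have key : ∀ z : {w : Wt r p i j // Multiplicative.toAdd (abh r w.1) = v} ×
        {w : Wt r p i j // Multiplicative.toAdd (abh r w.1) = v},
      ∃ t : {w : FreeGroup (Fin r) // ¬ PotPosFG w ∧ w.norm = 2*p+6},
      t.1.toWord = z.1.1.1.toWord ++ (c ++ FreeGroup.invRev z.2.1.1.toWord) := by
    rintro ⟨u, w⟩
    set l1 := u.1.1.toWord with hl1
    set l2 := w.1.1.toWord with hl2
    have hlen1 : l1.length = p + 1 := u.1.2.1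
    have hlen2 : l2.length = p + 1 := w.1.2.1
    have hinv : FreeGroup.invRev l2 = (w.1.1⁻¹).toWord := (FreeGroup.toWord_inv _).symm
    have hchain : (l1 ++ (c ++ FreeGroup.invRev l2)).IsChain NC := by
      rw [List.isChain_append]
      refine ⟨chain'_toWord _, ?_, ?_⟩
      · rw [List.isChain_append]
        refine ⟨hcchain, hinv ▸ chain'_toWord _, ?_⟩
        -- junction c → invRev l2
        intro x hx y hy
        rw [hc] at hx
        simp only [List.getLast?_cons_cons, List.getLast?_singleton, Option.mem_some_iff,
          Option.some.injEq] at hx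
        rw [head?_invRev] at hy
        simp only [Option.mem_def, Option.map_eq_some_iff] at hy
        obtain ⟨a, ha, rfl⟩ := hy
        have hgood := w.1.2.2 a ha
        rintro ⟨h1, h2⟩
        rw [← hx] at h1 h2
        simp only [Bool.not_not] at h2
        exact hgood.1 (Prod.ext h1.symm h2.symm)
      · -- junction l1 → c ++ invRev
        intro x hx y hy
        rw [hc] at hy
        simp only [List.cons_append, List.head?_cons, Option.mem_some_iff] at hy
        have hgood := u.1.2.2 x hx
        rintro ⟨h1, h2⟩
        rw [← hy] at h1 h2
        simp only [Bool.not_true] at h2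
        exact hgood.2 (Prod.ext h1 h2)
    have htoW : (FreeGroup.mk (l1 ++ (c ++ FreeGroup.invRev l2))).toWord
        = l1 ++ (c ++ FreeGroup.invRev l2) := toWord_mk_self hchain
    have hnorm : (FreeGroup.mk (l1 ++ (c ++ FreeGroup.invRev l2))).norm = 2*p+6 := by
      rw [norm_mk_self hchain]
      simp [hc, hlen1, FreeGroup.invRev_length, hlen2]
      omega
    have hzmk : FreeGroup.mk (l1 ++ (c ++ FreeGroup.invRev l2))
        = u.1.1 * (FreeGroup.mk c * w.1.1⁻¹) := by
      conv_rhs => rw [← FreeGroup.mk_toWord (x := u.1.1), ← FreeGroup.mk_toWord (x := w.1.1)]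
      rw [FreeGroup.inv_mk, FreeGroup.mul_mk, FreeGroup.mul_mk]
    have habz : abh r (FreeGroup.mk (l1 ++ (c ++ FreeGroup.invRev l2))) = 1 := by
      rw [hzmk]
      have huw : abh r u.1.1 = abh r w.1.1 := by
        apply Multiplicative.toAdd.injective
        rw [u.2, w.2]
      simp only [_root_.map_mul, _root_.map_inv, habhc, huw]
      group
    have hne : FreeGroup.mk (l1 ++ (c ++ FreeGroup.invRev l2)) ≠ 1 := by
      intro h
      have h0 : (FreeGroup.mk (l1 ++ (c ++ FreeGroup.invRev l2))).toWord = [] := by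
        rw [h]; exact FreeGroup.toWord_one
      rw [htoW] at h0
      have := congrArg List.length h0
      simp [hlen1] at this
    exact ⟨⟨_, not_potpos hne habz, hnorm⟩, htoW⟩
  choose f hf using key
  have hcard : Nat.card ({w : Wt r p i j // Multiplicative.toAdd (abh r w.1) = v} ×
      {w : Wt r p i j // Multiplicative.toAdd (abh r w.1) = v})
      = Nat.card {w : Wt r p i j // Multiplicative.toAdd (abh r w.1) = v} ^ 2 := by
    rw [Nat.card_prod, sq]
  rw [← hcard, Nc]
  have : Finite {w : FreeGroup (Fin r) // ¬ PotPosFG w ∧ w.norm = 2*p+6} :=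
    finite_of_norm _ _
  have h26 : (2*p+6 : ℕ) = 2*p+6 := rfl
  apply Nat.card_le_card_of_injective f
  rintro ⟨u, w⟩ ⟨u', w'⟩ huv
  have := congrArg (fun t => t.1.toWord) huv
  rw [hf ⟨u, w⟩, hf ⟨u', w'⟩] at this
  simp only at this
  have hlenu : u.1.1.toWord.length = p + 1 := u.1.2.1
  have hlenu' : u'.1.1.toWord.length = p + 1 := u'.1.2.1
  have hl1 : u.1.1.toWord = u'.1.1.toWord := by
    have h1 := congrArg (List.take (p+1)) this
    rwa [List.take_left' hlenu, List.take_left' hlenu'] at h1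
  have hl2 : w.1.1.toWord = w'.1.1.toWord := by
    have h2 := congrArg (List.drop (p+5)) this
    rw [← List.append_assoc, ← List.append_assoc] at h2
    have hL : (u.1.1.toWord ++ c).length = p + 5 := by
      rw [List.length_append, hlenu]; simp [hc]
    have hL' : (u'.1.1.toWord ++ c).length = p + 5 := by
      rw [List.length_append, hlenu']; simp [hc]
    rw [List.drop_left' hL, List.drop_left' hL'] at h2
    exact FreeGroup.invRev_injective h2
  have hu : u = u' := Subtype.ext (Subtype.ext (FreeGroup.toWord_injective hl1))
  have hw : w = w' := Subtype.ext (Subtype.ext (FreeGroup.toWord_injective hl2))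
  rw [hu, hw]


lemma main_nat (r : ℕ) (hr : 2 ≤ r) (p : ℕ) :
    Tc r (2*p+6) ≤ (2*p+3)^(2*r) * (2*r)^6 * Nc r (2*p+6) := by
  set i : Fin r := ⟨0, by omega⟩ with hi
  set j : Fin r := ⟨1, by omega⟩ with hj
  have hij : i ≠ j := by simp [hi, hj, Fin.ext_iff]
  obtain ⟨v, hv⟩ := pigeon_Wt p i j hij
  set F := Nat.card {w : Wt r p i j // Multiplicative.toAdd (abh r w.1) = v} with hFdef
  have h1 : Tc r (2*p+6) ≤ Tc r p * Tc r p * (2*r)^6 := by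
    have ha : Tc r (2*p+6) ≤ Tc r p * Tc r (p+6) := by
      have h := Tc_split r p (p+6)
      have : 2*p+6 = p + (p+6) := by omega
      rwa [this]
    have hb : Tc r (p+6) ≤ Tc r p * Tc r 6 := Tc_split r p 6
    have hcpow : Tc r 6 ≤ (2*r)^6 := Tc_le_pow r 6
    calc Tc r (2*p+6) ≤ Tc r p * Tc r (p+6) := ha
      _ ≤ Tc r p * (Tc r p * Tc r 6) := Nat.mul_le_mul_left _ hb
      _ ≤ Tc r p * (Tc r p * (2*r)^6) := Nat.mul_le_mul_left _ (Nat.mul_le_mul_left _ hcpow)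
      _ = Tc r p * Tc r p * (2*r)^6 := by ring
  have h2 : Tc r p * Tc r p ≤ (2*p+3)^(2*r) * Nc r (2*p+6) := by
    calc Tc r p * Tc r p ≤ ((2*p+3)^r * F) * ((2*p+3)^r * F) := Nat.mul_le_mul hv hv
      _ = (2*p+3)^(2*r) * F^2 := by
          have h2r : 2*r = r + r := by omega
          rw [h2r, pow_add]; ring
      _ ≤ (2*p+3)^(2*r) * Nc r (2*p+6) :=
          Nat.mul_le_mul_left _ (pair_le_Nc p i j hij v)
  calc Tc r (2*p+6) ≤ Tc r p * Tc r p * (2*r)^6 := h1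
    _ ≤ ((2*p+3)^(2*r) * Nc r (2*p+6)) * (2*r)^6 := Nat.mul_le_mul_right _ h2
    _ = (2*p+3)^(2*r) * (2*r)^6 * Nc r (2*p+6) := by ring

lemma growth_univ (r n : ℕ) :
    growthFG (Set.univ : Set (FreeGroup (Fin r))) n = Tc r n :=
  Nat.card_congr (Equiv.subtypeEquivRight (by intro w; simp))

lemma growth_npp (r n : ℕ) :
    growthFG {w : FreeGroup (Fin r) | ¬ PotPosFG w} n = Nc r n :=
  Nat.card_congr (Equiv.subtypeEquivRight (by intro w; simp [Set.mem_setOf_eq]))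

end Counting
end NPPaux

theorem potPos_not_exponentially_generic (r : ℕ) (hr : 2 ≤ r) :
    ¬ ∃ C : ℝ, 1 < C ∧ ∃ K : ℝ, 0 < K ∧ ∃ m : ℕ, ∀ n ≥ m,
      ((growthFG {w : FreeGroup (Fin r) | ¬ PotPosFG w} n : ℝ) + 1) /
        ((growthFG (Set.univ : Set (FreeGroup (Fin r))) n : ℝ) + 1) ≤ K * C⁻¹ ^ n := by
  rintro ⟨C, hC, K, hK, m, hm⟩
  open NPPaux in
  -- smallness of polynomial times geometric
  have hCinv : ‖C⁻¹‖ < 1 := by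
    rw [Real.norm_eq_abs, abs_of_nonneg (by positivity)]
    rw [inv_lt_one_iff₀]
    right; exact hC
  have hsum : Summable (fun n : ℕ => (n : ℝ)^(2*r) * C⁻¹ ^ n) :=
    summable_pow_mul_geometric_of_norm_lt_one (2*r) hCinv
  have htend : Filter.Tendsto (fun n : ℕ => K * (2*r : ℝ)^6 * ((n : ℝ)^(2*r) * C⁻¹ ^ n))
      Filter.atTop (nhds 0) := by
    have := (hsum.tendsto_atTop_zero).const_mul (K * (2*r : ℝ)^6)
    simpa using this
  have hev := htend.eventually_lt_const (by norm_num : (0:ℝ) < 1)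
  obtain ⟨M, hM⟩ := Filter.eventually_atTop.mp hev
  set p := max M m with hp
  set n := 2*p+6 with hn
  have hnm : n ≥ m := by omega
  have hnM : n ≥ M := by omega
  have hd := hm n hnm
  -- the key counting bound
  have hmain := NPPaux.main_nat r hr p
  set E : ℝ := (((2*p+3)^(2*r) * (2*r)^6 : ℕ) : ℝ) with hE
  have hE1 : (1:ℝ) ≤ E := by
    rw [hE]
    have : 1 ≤ ((2*p+3)^(2*r) * (2*r)^6 : ℕ) :=
      Nat.one_le_iff_ne_zero.mpr (Nat.mul_ne_zero (pow_ne_zero _ (by omega)) (pow_ne_zero _ (by omega)))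
    exact_mod_cast this
  have hEpos : (0:ℝ) < E := by linarith
  rw [NPPaux.growth_univ, NPPaux.growth_npp] at hd
  set Nn := NPPaux.Nc r n with hNn
  set Tn := NPPaux.Tc r n with hTn
  have hTN : (Tn : ℝ) + 1 ≤ E * ((Nn : ℝ) + 1) := by
    have : (Tn : ℝ) ≤ E * Nn := by
      rw [hE]
      exact_mod_cast hmain
    nlinarith
  have hTpos : (0:ℝ) < (Tn : ℝ) + 1 := by positivity
  have hNpos : (0:ℝ) < (Nn : ℝ) + 1 := by positivity
  have hlow : 1 / E ≤ ((Nn : ℝ) + 1) / ((Tn : ℝ) + 1) := by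
    rw [div_le_div_iff₀ hEpos hTpos]
    nlinarith
  have hkey : 1 / E ≤ K * C⁻¹ ^ n := le_trans hlow hd
  have h1 : (1:ℝ) ≤ K * C⁻¹ ^ n * E := by
    rwa [div_le_iff₀ hEpos] at hkey
  have hb : K * C⁻¹ ^ n * E ≤ K * (2*r : ℝ)^6 * ((n : ℝ)^(2*r) * C⁻¹ ^ n) := by
    have hCn : (0:ℝ) ≤ C⁻¹ ^ n := by positivity
    have hEb : E ≤ (n : ℝ)^(2*r) * (2*r : ℝ)^6 := by
      have hnat : ((2*p+3)^(2*r) * (2*r)^6 : ℕ) ≤ (n^(2*r) * (2*r)^6 : ℕ) :=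
        Nat.mul_le_mul_right _ (Nat.pow_le_pow_left (by omega) _)
      calc E ≤ ((n^(2*r) * (2*r)^6 : ℕ) : ℝ) := by rw [hE]; exact_mod_cast hnat
        _ = (n : ℝ)^(2*r) * (2*r : ℝ)^6 := by push_cast; ring

    calc K * C⁻¹ ^ n * E ≤ K * C⁻¹ ^ n * ((n : ℝ)^(2*r) * (2*r : ℝ)^6) := by
          apply mul_le_mul_of_nonneg_left hEb (by positivity)
      _ = K * (2*r : ℝ)^6 * ((n : ℝ)^(2*r) * C⁻¹ ^ n) := by ring
  have := hM n hnM
  linarith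
end
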